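/- arXiv:1612.06220 — 8 statements merged into one kernel-verified Lean document; each statement's English description precedes it below -/
import Mathlib

section
/- Let G be a second countable locally compact group and H a closed subgroup of finite covolume in G, with m the G-invariant Borel probability measure on G/H. Then the G-action on (G/H, m) is strongly ergodic: for every sequence (Bₙ) of measurable subsets of G/H such that m(Bₙ Δ g·Bₙ) → 0 as n→∞ for every g ∈ G, one has m(Bₙ)(1 − m(Bₙ)) → 0 as n→∞. -/
/-!
Fix a right Haar measure `ν`, a compact neighbourhood `U` of `1` and a compact `K ⊆ G` whose
image carries most of `μ`. By Tonelli and dominated convergence, for most points `x` the set of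
`g ∈ U K⁻¹` with `g • x ∈ Bₙ ↮ x ∈ Bₙ` has `ν`-measure `< ν U / 2` once `n` is large. If both
`Bₙ` and its complement had measure bounded below, we could pick such points `h₁H ∈ Bₙ` and
`h₂H ∉ Bₙ` with `h₁, h₂ ∈ K`; translating by `h₁⁻¹` and `h₂⁻¹` would then cover `U` by two sets
of measure `< ν U / 2`.
-/

open MeasureTheory Filter Set
open scoped Pointwise symmDiff ENNReal Topology

section CrossingSet

variable {G X : Type*}

def crossingSet (G : Type*) [SMul G X] (B : Set X) : Set (X × G) :=
  ((fun p : X × G => p.2 • p.1) ⁻¹' B) ∆ (Prod.fst ⁻¹' B)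

lemma measurableSet_crossingSet [MeasurableSpace G] [MeasurableSpace X] [SMul G X]
    [MeasurableSMul₂ G X] {B : Set X} (hB : MeasurableSet B) :
    MeasurableSet (crossingSet G B) :=
  (hB.preimage (measurable_snd.smul measurable_fst)).symmDiff (hB.preimage measurable_fst)

lemma tendsto_lintegral_measure_crossingSet [MeasurableSpace G] [MeasurableSpace X] [SMul G X]
    [MeasurableSMul₂ G X] (μ : Measure X) [IsFiniteMeasure μ] (ν : Measure G) [IsFiniteMeasure ν]
    {B : ℕ → Set X} (hB : ∀ n, MeasurableSet (B n))
    (hai : ∀ g : G, Tendsto (fun n => μ (((g • ·) ⁻¹' B n) ∆ B n)) atTop (𝓝 0)) :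
    Tendsto (fun n => ∫⁻ x, ν (Prod.mk x ⁻¹' crossingSet G (B n)) ∂μ) atTop (𝓝 0) := by
  have hswap : ∀ n, ∫⁻ x, ν (Prod.mk x ⁻¹' crossingSet G (B n)) ∂μ
      = ∫⁻ g, μ (((g • ·) ⁻¹' B n) ∆ B n) ∂ν := fun n => by
    rw [← Measure.prod_apply (measurableSet_crossingSet (hB n)),
      Measure.prod_apply_symm (measurableSet_crossingSet (hB n))]
    rfl
  simp_rw [hswap]
  simpa using tendsto_lintegral_of_dominated_convergence
    (F := fun n g => μ (((g • ·) ⁻¹' B n) ∆ B n)) (fun _ => μ univ)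
    (fun n => measurable_measure_prodMk_right (measurableSet_crossingSet (hB n)))
    (fun n => ae_of_all _ fun g => measure_mono (subset_univ _))
    (by simp [lintegral_const, ENNReal.mul_ne_top]) (ae_of_all _ hai)

variable [Group G] [MeasurableSpace G] [MeasurableMul G] [MulAction G X]

lemma measure_inter_le_restrict_crossingSet (ν : Measure G) [ν.IsMulRightInvariant]
    (U : Set G) {K : Set G} (B : Set X) (x₀ : X) {h : G} (hh : h ∈ K) :
    ν (U ∩ {g | ¬(g • x₀ ∈ B ↔ h • x₀ ∈ B)})
      ≤ ν.restrict (U * K⁻¹) (Prod.mk (h • x₀) ⁻¹' crossingSet G B) := by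
  calc ν (U ∩ {g | ¬(g • x₀ ∈ B ↔ h • x₀ ∈ B)})
      ≤ ν ((· * h⁻¹) ⁻¹' (Prod.mk (h • x₀) ⁻¹' crossingSet G B ∩ (U * K⁻¹))) := by
        refine measure_mono fun g ⟨hgU, (hg : ¬(g • x₀ ∈ B ↔ h • x₀ ∈ B))⟩ =>
          ⟨?_, mul_mem_mul hgU (inv_mem_inv.2 hh)⟩
        simp only [crossingSet, mem_preimage, mem_symmDiff, mul_smul, inv_smul_smul]
        tauto
    _ = ν (Prod.mk (h • x₀) ⁻¹' crossingSet G B ∩ (U * K⁻¹)) := measure_preimage_mul_right ν _ _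
    _ ≤ ν.restrict (U * K⁻¹) (Prod.mk (h • x₀) ⁻¹' crossingSet G B) := Measure.le_restrict_apply _ _

lemma measure_le_restrict_crossingSet_add (ν : Measure G) [ν.IsMulRightInvariant]
    (U : Set G) {K : Set G} {B : Set X} (x₀ : X) {h₁ h₂ : G} (hh₁ : h₁ ∈ K) (hh₂ : h₂ ∈ K)
    (h₁B : h₁ • x₀ ∈ B) (h₂B : h₂ • x₀ ∉ B) :
    ν U ≤ ν.restrict (U * K⁻¹) (Prod.mk (h₁ • x₀) ⁻¹' crossingSet G B)
      + ν.restrict (U * K⁻¹) (Prod.mk (h₂ • x₀) ⁻¹' crossingSet G B) := by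
  have hcover : U ⊆ (U ∩ {g | ¬(g • x₀ ∈ B ↔ h₁ • x₀ ∈ B)})
      ∪ (U ∩ {g | ¬(g • x₀ ∈ B ↔ h₂ • x₀ ∈ B)}) := fun g hg => by
    by_cases hgB : g • x₀ ∈ B <;> simp_all
  calc ν U ≤ _ := (measure_mono hcover).trans (measure_union_le _ _)
    _ ≤ _ := add_le_add (measure_inter_le_restrict_crossingSet ν U B x₀ hh₁)
        (measure_inter_le_restrict_crossingSet ν U B x₀ hh₂)

end CrossingSet

lemma tendsto_measure_le_of_tendsto_lintegral {α : Type*} [MeasurableSpace α] {μ : Measure α}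
    {f : ℕ → α → ℝ≥0∞} (hf : ∀ n, AEMeasurable (f n) μ)
    (h : Tendsto (fun n => ∫⁻ x, f n x ∂μ) atTop (𝓝 0)) {c : ℝ≥0∞} (hc : c ≠ 0) (hc' : c ≠ ∞) :
    Tendsto (fun n => μ {x | c ≤ f n x}) atTop (𝓝 0) := by
  have hdiv : Tendsto (fun n => (∫⁻ x, f n x ∂μ) / c) atTop (𝓝 0) := by
    simpa using ENNReal.Tendsto.div_const h (Or.inr hc)
  exact tendsto_of_tendsto_of_tendsto_of_le_of_le tendsto_const_nhds hdiv (fun _ => bot_le)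
    fun n => meas_ge_le_lintegral_div (hf n) hc hc'

lemma nonempty_diff_union_of_measure_add_lt {α : Type*} [MeasurableSpace α] {μ : Measure α}
    {E A D : Set α} (h : μ A + μ D < μ E) : (E \ (A ∪ D)).Nonempty := by
  by_contra hE
  rw [not_nonempty_iff_eq_empty, sdiff_eq_empty] at hE
  exact (measure_mono hE |>.trans (measure_union_le A D)).not_gt h

lemma exists_isCompact_measure_compl_image_lt {X Y : Type*} [TopologicalSpace X]
    [SigmaCompactSpace X] [WeaklyLocallyCompactSpace X] [TopologicalSpace Y] [MeasurableSpace Y]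
    [OpensMeasurableSpace Y] {f : X → Y} (hf : IsOpenMap f) (hsurj : Function.Surjective f)
    (μ : Measure Y) [IsFiniteMeasure μ] {ε : ℝ≥0∞} (hε : 0 < ε) :
    ∃ K, IsCompact K ∧ μ (f '' K)ᶜ < ε := by
  let K := CompactExhaustion.choice X
  have hcover : ⋂ n, (f '' interior (K n))ᶜ = ∅ := by
    rw [← compl_iUnion, compl_empty_iff, ← image_iUnion, eq_univ_iff_forall]
    intro y
    obtain ⟨x, rfl⟩ := hsurj y
    obtain ⟨n, hn⟩ := K.exists_mem x
    exact ⟨x, mem_iUnion.2 ⟨n + 1, K.subset_interior_succ n hn⟩, rfl⟩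
  have hlim : Tendsto (fun n => μ (f '' interior (K n))ᶜ) atTop (𝓝 0) := by
    simpa [Function.comp_def, hcover] using tendsto_measure_iInter_atTop (μ := μ)
      (fun n => (hf _ isOpen_interior).isClosed_compl.measurableSet.nullMeasurableSet)
      (fun m n hmn => compl_subset_compl.2 (image_mono (interior_mono (K.subset hmn))))
      ⟨0, measure_ne_top μ _⟩
  obtain ⟨n, hn⟩ := (hlim.eventually_lt_const hε).exists
  exact ⟨K n, K.isCompact n,
    (measure_mono (compl_subset_compl.2 (image_mono interior_subset))).trans_lt hn⟩

lemma toReal_mul_one_sub_toReal_le_min {α : Type*} [MeasurableSpace α] {μ : Measure α}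
    [IsProbabilityMeasure μ] {s : Set α} (hs : MeasurableSet s) :
    (μ s).toReal * (1 - (μ s).toReal) ≤ (min (μ s) (μ sᶜ)).toReal := by
  have h1 : (μ s).toReal ≤ 1 := measureReal_le_one
  rw [ENNReal.toReal_min (measure_ne_top _ _) (measure_ne_top _ _), prob_compl_eq_one_sub hs,
    ENNReal.toReal_sub_of_le prob_le_one ENNReal.one_ne_top, ENNReal.toReal_one]
  have h0 : 0 ≤ (μ s).toReal := ENNReal.toReal_nonneg
  exact le_min (mul_le_of_le_one_right h0 (by linarith))
    (mul_le_of_le_one_left (by linarith) h1)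

theorem tendsto_min_measure_compl_of_tendsto_measure_symmDiff {G : Type*} [Group G]
    [TopologicalSpace G] [IsTopologicalGroup G] [LocallyCompactSpace G] [SecondCountableTopology G]
    [MeasurableSpace G] [BorelSpace G] (H : Subgroup G)
    [MeasurableSpace (G ⧸ H)] [BorelSpace (G ⧸ H)] (μ : Measure (G ⧸ H)) [IsFiniteMeasure μ]
    {B : ℕ → Set (G ⧸ H)} (hB : ∀ n, MeasurableSet (B n))
    (hai : ∀ g : G, Tendsto (fun n => μ (((g • ·) ⁻¹' B n) ∆ B n)) atTop (𝓝 0)) :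
    Tendsto (fun n => min (μ (B n)) (μ (B n)ᶜ)) atTop (𝓝 0) := by
  refine ENNReal.tendsto_nhds_zero.2 fun ε hε => ?_
  have hε2 : 0 < ε / 2 := ENNReal.half_pos hε.ne'
  obtain ⟨K, hK, hKμ⟩ := exists_isCompact_measure_compl_image_lt QuotientGroup.isOpenMap_coe
    QuotientGroup.mk_surjective μ hε2
  obtain ⟨U, hU, hU1⟩ := exists_compact_mem_nhds (1 : G)
  let ν : Measure G := Measure.haar.inv
  have hνU : 0 < ν U := Measure.measure_pos_of_mem_nhds ν hU1
  have : IsFiniteMeasure (ν.restrict (U * K⁻¹)) :=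
    ⟨by simpa using (hU.mul hK.inv).measure_lt_top⟩
  let d (n : ℕ) (x : G ⧸ H) := ν.restrict (U * K⁻¹) (Prod.mk x ⁻¹' crossingSet G (B n))
  have hd : ∀ᶠ n in atTop, μ {x | ν U / 2 ≤ d n x} < ε / 2 :=
    (tendsto_measure_le_of_tendsto_lintegral
      (fun n => (measurable_measure_prodMk_left (measurableSet_crossingSet (hB n))).aemeasurable)
      (tendsto_lintegral_measure_crossingSet μ _ hB hai) (ENNReal.half_pos hνU.ne').ne'
      (ENNReal.div_ne_top hU.measure_lt_top.ne two_ne_zero)).eventually_lt_const hε2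
  filter_upwards [hd] with n hn
  by_contra! hbig
  rw [lt_min_iff] at hbig
  have hmk : ∀ h : G, (h : G ⧸ H) = h • ((1 : G) : G ⧸ H) := fun h => by
    rw [MulAction.Quotient.smul_mk, smul_eq_mul, mul_one]
  have hgood : ∀ E, ε < μ E → ∃ h ∈ K, (h : G ⧸ H) ∈ E ∧ d n h < ν U / 2 := fun E hE => by
    obtain ⟨_, hxE, hx⟩ := nonempty_diff_union_of_measure_add_lt
      ((ENNReal.add_lt_add hKμ hn).trans_le (ENNReal.add_halves ε).le |>.trans hE)
    simp only [mem_union, not_or, notMem_compl_iff, mem_ofPred_eq, not_le] at hx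
    obtain ⟨⟨h, hhK, rfl⟩, hdx⟩ := hx
    exact ⟨h, hhK, hxE, hdx⟩
  obtain ⟨h₁, hh₁K, hh₁B, hd₁⟩ := hgood _ hbig.1
  obtain ⟨h₂, hh₂K, hh₂B, hd₂⟩ := hgood _ hbig.2
  rw [hmk] at hh₁B hh₂B hd₁ hd₂
  have hνU_le := measure_le_restrict_crossingSet_add ν U _ hh₁K hh₂K hh₁B hh₂B
  exact (hνU_le.trans_lt (ENNReal.add_lt_add hd₁ hd₂)).ne (ENNReal.add_halves _).symm

theorem stronglyErgodic_of_transitive_general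
    {G : Type*} [Group G] [TopologicalSpace G] [IsTopologicalGroup G]
    [LocallyCompactSpace G] [SecondCountableTopology G]
    (H : Subgroup G)
    [MeasurableSpace (G ⧸ H)] [BorelSpace (G ⧸ H)]
    (μ : Measure (G ⧸ H)) [IsProbabilityMeasure μ]
    (B : ℕ → Set (G ⧸ H)) (hBmeas : ∀ n, MeasurableSet (B n))
    (hai : ∀ g : G,
      Tendsto (fun n => μ (symmDiff (B n) ((fun x : G ⧸ H => g • x) '' B n))) atTop (nhds 0)) :
    Tendsto (fun n => (μ (B n)).toReal * (1 - (μ (B n)).toReal)) atTop (nhds 0) := by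
  borelize G
  have hmin := tendsto_min_measure_compl_of_tendsto_measure_symmDiff H μ hBmeas fun g => by
    simpa only [preimage_smul, image_smul, symmDiff_comm] using hai g⁻¹
  refine squeeze_zero (fun n => ?_) (fun n => toReal_mul_one_sub_toReal_le_min (hBmeas n))
    (by simpa [Function.comp_def] using (ENNReal.tendsto_toReal ENNReal.zero_ne_top).comp hmin)
  have h1 : (μ (B n)).toReal ≤ 1 := measureReal_le_one
  exact mul_nonneg ENNReal.toReal_nonneg (by linarith)

/-- Let `G` be a second countable locally compact group, `H` a closed subgroup of finite
covolume, and `μ` the `G`-invariant Borel probability measure on `G/H`.  Then the `G`-action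
on `(G/H, μ)` is strongly ergodic: any almost-invariant sequence of measurable sets `Bₙ`
(i.e. `μ (Bₙ ∆ g • Bₙ) → 0` for every `g`) satisfies `μ(Bₙ)(1 - μ(Bₙ)) → 0`. -/
theorem stronglyErgodic_of_transitive
    {G : Type*} [Group G] [TopologicalSpace G] [IsTopologicalGroup G]
    [LocallyCompactSpace G] [T2Space G] [SecondCountableTopology G]
    (H : Subgroup G) (hHcl : IsClosed (H : Set G))
    [MeasurableSpace (G ⧸ H)] [BorelSpace (G ⧸ H)]
    (μ : Measure (G ⧸ H)) [IsProbabilityMeasure μ]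
    (hinv : ∀ g : G, Measure.map (fun x : G ⧸ H => g • x) μ = μ)
    (B : ℕ → Set (G ⧸ H)) (hBmeas : ∀ n, MeasurableSet (B n))
    (hai : ∀ g : G,
      Tendsto (fun n => μ (symmDiff (B n) ((fun x : G ⧸ H => g • x) '' B n))) atTop (nhds 0)) :
    Tendsto (fun n => (μ (B n)).toReal * (1 - (μ (B n)).toReal)) atTop (nhds 0) :=
  stronglyErgodic_of_transitive_general H μ B hBmeas hai
end

section
/- Let G be a solvable totally disconnected locally compact group. If G is Noetherian, then G admits a compact open normal subgroup. -/
/-!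
By van Dantzig's theorem `G` has a compact open subgroup `U`. Descending the derived series, we
find for every `n` an open normal subgroup `W ⊇ G⁽ⁿ⁾` that is compact modulo `G⁽ⁿ⁾`; solvability
ends the descent at `G⁽ⁿ⁾ = 1`.

In the step, `Y = G⁽ⁿ⁾` is abelian modulo `Z = G⁽ⁿ⁺¹⁾`, so `Y` normalizes `A = (U ∩ Y) Z`, and
as `W` is compact modulo `Y` the core `N` of `A` in `W` is still open in `Y`. The Noetherian
property makes `UY` generated by `U` and finitely many `U`-orbits in `Y`, which form a compact
set; as `Y / N` is discrete, an open subgroup of `U` centralizes these orbits modulo `N`. This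
gives an open subgroup `K ≤ UN` normalized by `UY`, whose core in `W` is open, normal in `W` and
compact modulo `Z`. Such subgroups are closed under products and conjugation, so by the Noetherian
property there is a largest one, which is normal in `G`.
-/

/-- A locally compact group is Noetherian if every ascending chain of open subgroups
stabilizes. -/
def NoetherianLC (G : Type*) [Group G] [TopologicalSpace G] : Prop :=
  ∀ O : ℕ →o Subgroup G, (∀ n, IsOpen ((O n : Subgroup G) : Set G)) →
    ∃ n, ∀ m, n ≤ m → O m = O n

open Filter Topology Pointwise
open scoped commutatorElement

section Group

variable {G : Type*} [Group G]

theorem le_normalizer_sup {H M₁ M₂ : Subgroup G} (h₁ : H ≤ Subgroup.normalizer M₁)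
    (h₂ : H ≤ Subgroup.normalizer M₂) : H ≤ Subgroup.normalizer (M₁ ⊔ M₂ : Subgroup G) :=
  fun g hg => Subgroup.mem_normalizer_iff_map_conj_eq.mpr <| by
    rw [Subgroup.map_sup, Subgroup.mem_normalizer_iff_map_conj_eq.mp (h₁ hg),
      Subgroup.mem_normalizer_iff_map_conj_eq.mp (h₂ hg)]

theorem mem_normalizer_of_commutator_mem {N K : Subgroup G} (hNK : N ≤ K) {g : G}
    (hg : g ∈ Subgroup.normalizer N) (h : ∀ k ∈ K, ⁅k, g⁆ ∈ N) :
    g ∈ Subgroup.normalizer K := by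
  intro k
  refine ⟨fun hk => ?_, fun hk => ?_⟩
  · have : g * k * g⁻¹ = ⁅k, g⁆⁻¹ * k := by group
    exact this ▸ mul_mem (hNK (inv_mem (h k hk))) hk
  · have hc : g⁻¹ * ⁅g * k * g⁻¹, g⁆ * g ∈ N :=
      (Subgroup.mem_normalizer_iff''.mp hg _).mp (h _ hk)
    have : k = g⁻¹ * ⁅g * k * g⁻¹, g⁆ * g * (g * k * g⁻¹) := by
      simp only [commutatorElement_def]; group
    exact this ▸ mul_mem (hNK hc) hk

def centralizerMod (N : Subgroup G) (S : Set G) : Subgroup G where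
  carrier := {g | g ∈ Subgroup.normalizer N ∧ ∀ s ∈ S, ⁅g, s⁆ ∈ N}
  one_mem' := ⟨one_mem _, fun s _ => by simp⟩
  mul_mem' := by
    rintro g₁ g₂ ⟨hg₁, h₁⟩ ⟨hg₂, h₂⟩
    refine ⟨mul_mem hg₁ hg₂, fun s hs => ?_⟩
    have : ⁅g₁ * g₂, s⁆ = g₁ * ⁅g₂, s⁆ * g₁⁻¹ * ⁅g₁, s⁆ := by
      simp only [commutatorElement_def]; group
    exact this ▸ mul_mem ((hg₁ _).mp (h₂ s hs)) (h₁ s hs)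
  inv_mem' := by
    rintro g ⟨hg, h⟩
    refine ⟨inv_mem hg, fun s hs => ?_⟩
    have : ⁅g⁻¹, s⁆ = g⁻¹ * ⁅g, s⁆⁻¹ * g⁻¹⁻¹ := by
      simp only [commutatorElement_def]; group
    exact this ▸ (inv_mem hg _).mp (inv_mem (h s hs))

theorem mem_centralizerMod {N : Subgroup G} {S : Set G} {g : G} :
    g ∈ centralizerMod N S ↔ g ∈ Subgroup.normalizer N ∧ ∀ s ∈ S, ⁅g, s⁆ ∈ N :=
  Iff.rfl

theorem le_centralizerMod {N : Subgroup G} {S : Set G}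
    (hS : ∀ s ∈ S, s ∈ Subgroup.normalizer N) : N ≤ centralizerMod N S := by
  refine fun n hn => ⟨Subgroup.le_normalizer hn, fun s hs => ?_⟩
  have : ⁅n, s⁆ = n * (s * n⁻¹ * s⁻¹) := by simp only [commutatorElement_def]; group
  exact this ▸ mul_mem hn ((hS s hs _).mp (inv_mem hn))

def relCore (L K : Subgroup G) : Subgroup G :=
  ⨅ l ∈ L, K.comap (MulAut.conj l).toMonoidHom

theorem mem_relCore {L K : Subgroup G} {x : G} :
    x ∈ relCore L K ↔ ∀ l ∈ L, l * x * l⁻¹ ∈ K := by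
  simp [relCore, Subgroup.mem_iInf]

theorem relCore_le (L K : Subgroup G) : relCore L K ≤ K :=
  fun x hx => by simpa using mem_relCore.mp hx 1 (one_mem L)

theorem le_relCore {L K M : Subgroup G} (hMK : M ≤ K) (hLM : L ≤ Subgroup.normalizer M) :
    M ≤ relCore L K :=
  fun x hx => mem_relCore.mpr fun _ hl => hMK ((hLM hl x).mp hx)

theorem le_normalizer_relCore (L K : Subgroup G) : L ≤ Subgroup.normalizer (relCore L K) := by
  refine Subgroup.le_normalizer_iff.mpr fun g hg x hx => mem_relCore.mpr fun l hl => ?_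
  have : l * (g * x * g⁻¹) * l⁻¹ = (l * g) * x * (l * g)⁻¹ := by group
  exact this ▸ mem_relCore.mp hx _ (mul_mem hl hg)

end Group

section TopologicalGroup

variable {G : Type*} [Group G] [TopologicalSpace G]

/-- For `G` locally compact and `Z` closed normal: the image of `s` in `G ⧸ Z` is relatively
compact. Stated without the quotient, so that `Z` can be any subgroup. -/
def IsCompactMod (s : Set G) (Z : Subgroup G) : Prop :=
  ∃ C : Set G, IsCompact C ∧ s ⊆ C * Z

theorem isCompactMod_of_le_sup {U M Z : Subgroup G} [Z.Normal] (hU : IsCompact (U : Set G))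
    (hM : M ≤ U ⊔ Z) : IsCompactMod (M : Set G) Z :=
  ⟨U, hU, Subgroup.mul_normal U Z ▸ hM⟩

theorem IsCompactMod.isCompact_of_bot {s : Set G} (h : IsCompactMod s ⊥) (hs : IsClosed s) :
    IsCompact s := by
  obtain ⟨C, hC, hsC⟩ := h
  refine hC.of_isClosed_subset hs fun x hx => ?_
  obtain ⟨c, hc, z, hz, rfl⟩ := hsC hx
  rw [Subgroup.coe_bot, Set.mem_singleton_iff] at hz
  simpa [hz] using hc

theorem IsCompact.eventually_forall_apply_mem {f : G → G → G}
    (hf : Continuous (Function.uncurry f)) (hf1 : ∀ c, f 1 c = 1) {C O : Set G}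
    (hC : IsCompact C) (hO : O ∈ 𝓝 (1 : G)) : ∀ᶠ x in 𝓝 (1 : G), ∀ c ∈ C, f x c ∈ O :=
  hC.eventually_forall_of_forall_eventually fun c _ =>
    (hf.tendsto (1, c)).eventually_mem (by rwa [Function.uncurry_apply_pair, hf1])

variable [IsTopologicalGroup G]

theorem IsCompactMod.sup {M₁ M₂ Z : Subgroup G} [Z.Normal] (h₁ : IsCompactMod (M₁ : Set G) Z)
    (h₂ : IsCompactMod (M₂ : Set G) Z) (h : M₁ ≤ Subgroup.normalizer M₂) :
    IsCompactMod ((M₁ ⊔ M₂ : Subgroup G) : Set G) Z := by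
  obtain ⟨C₁, hC₁, hM₁⟩ := h₁
  obtain ⟨C₂, hC₂, hM₂⟩ := h₂
  refine ⟨C₁ * C₂, hC₁.mul hC₂, ?_⟩
  calc ((M₁ ⊔ M₂ : Subgroup G) : Set G) = M₁ * M₂ :=
        Subgroup.coe_mul_of_left_le_normalizer_right _ _ h
    _ ⊆ C₁ * Z * (C₂ * Z) := Set.mul_subset_mul hM₁ hM₂
    _ = C₁ * C₂ * Z := by
      rw [mul_assoc, ← mul_assoc (Z : Set G), ← Subgroup.set_mul_normal_comm, mul_assoc,
        coe_mul_coe, mul_assoc]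

theorem IsCompactMod.comap_conj {M Z : Subgroup G} [hZ : Z.Normal]
    (h : IsCompactMod (M : Set G) Z) (g : G) :
    IsCompactMod (M.comap (MulAut.conj g).toMonoidHom : Set G) Z := by
  obtain ⟨C, hC, hM⟩ := h
  refine ⟨(fun c => g⁻¹ * c * g) '' C, hC.image (by fun_prop), fun x hx => ?_⟩
  obtain ⟨c, hc, z, hz, hcz⟩ := hM (Subgroup.mem_comap.mp hx)
  refine ⟨g⁻¹ * c * g, ⟨c, hc, rfl⟩, g⁻¹ * z * g, by simpa using hZ.conj_mem z hz g⁻¹, ?_⟩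
  simp only [MulEquiv.coe_toMonoidHom, MulAut.conj_apply] at hcz
  calc g⁻¹ * c * g * (g⁻¹ * z * g) = g⁻¹ * (c * z) * g := by group
    _ = x := by rw [hcz]; group

theorem eventually_mem_relCore {L H K Y : Subgroup G} [hY : Y.Normal] {C : Set G}
    (hC : IsCompact C) (hL : (L : Set G) ⊆ H * C) (hH : H ≤ Subgroup.normalizer K)
    (hK : ∀ᶠ x in 𝓝 (1 : G), x ∈ Y → x ∈ K) :
    ∀ᶠ x in 𝓝 (1 : G), x ∈ Y → x ∈ relCore L K := by
  filter_upwards [hC.eventually_forall_apply_mem (f := fun x c => c * x * c⁻¹) (by fun_prop)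
    (by simp) hK] with x hx hxY
  refine mem_relCore.mpr fun l hl => ?_
  obtain ⟨h, hh, c, hc, rfl⟩ := hL hl
  have : h * c * x * (h * c)⁻¹ = h * (c * x * c⁻¹) * h⁻¹ := by group
  exact this ▸ (hH hh _).mp (hx c hc (hY.conj_mem x hxY c))

theorem isOpen_relCore {L H K : Subgroup G} {C : Set G} (hK : IsOpen (K : Set G))
    (hC : IsCompact C) (hL : (L : Set G) ⊆ H * C) (hH : H ≤ Subgroup.normalizer K) :
    IsOpen (relCore L K : Set G) := by
  have := eventually_mem_relCore (Y := ⊤) hC hL hH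
    (by filter_upwards [hK.mem_nhds (one_mem K)] with x hx _ using hx)
  exact Subgroup.isOpen_of_mem_nhds _ (g := 1) (by
    filter_upwards [this] with x hx using hx (Subgroup.mem_top x))

theorem isOpen_inf_centralizerMod {U N Y : Subgroup G} {O : Set G} (hU : IsOpen (U : Set G))
    (hUN : U ≤ Subgroup.normalizer N) (hUY : U ≤ Subgroup.normalizer Y) (hO : IsCompact O)
    (hOY : O ⊆ Y) (hN : ∀ᶠ x in 𝓝 (1 : G), x ∈ Y → x ∈ N) :
    IsOpen ((U ⊓ centralizerMod N O : Subgroup G) : Set G) := by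
  refine Subgroup.isOpen_of_mem_nhds _ (g := 1) ?_
  filter_upwards [hU.mem_nhds (one_mem U), hO.eventually_forall_apply_mem
    (f := fun x o => ⁅x, o⁆) (by simp only [commutatorElement_def]; fun_prop) (by simp) hN]
    with x hxU hx
  refine ⟨hxU, hUN hxU, fun o ho => hx o ho ?_⟩
  rw [commutatorElement_def]
  exact mul_mem ((hUY hxU o).mp (hOY ho)) (inv_mem (hOY ho))

theorem exists_isCompact_isOpen_subgroup [LocallyCompactSpace G] [T2Space G]
    [TotallyDisconnectedSpace G] :
    ∃ U : Subgroup G, IsCompact (U : Set G) ∧ IsOpen (U : Set G) := by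
  obtain ⟨K, hK, hK1⟩ := exists_compact_mem_nhds (1 : G)
  obtain ⟨W, hWcl, h1W, hWK⟩ := loc_compact_Haus_tot_disc_of_zero_dim.mem_nhds_iff.mp hK1
  have hW : IsCompact W := hK.of_isClosed_subset hWcl.isClosed hWK
  obtain ⟨V, hV, hVW⟩ := compact_open_separated_mul_left hW hWcl.isOpen subset_rfl
  set U := MulAction.stabilizer G W
  have hVU : V ∩ V⁻¹ ⊆ U := by
    rintro g ⟨hg, hg'⟩
    refine MulAction.mem_stabilizer_iff.mpr (subset_antisymm ?_ ?_)
    · exact (Set.smul_set_subset_smul hg).trans hVW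
    · rw [Set.subset_smul_set_iff]
      exact (Set.smul_set_subset_smul (Set.mem_inv.mp hg')).trans hVW
  have hUW : (U : Set G) ⊆ W := fun g hg => by
    rw [← MulAction.mem_stabilizer_iff.mp hg]
    simpa using Set.smul_mem_smul_set (a := g) h1W
  have hUo : IsOpen (U : Set G) :=
    U.isOpen_of_mem_nhds (mem_of_superset (inter_mem hV (inv_mem_nhds_one G hV)) hVU)
  exact ⟨U, hW.of_isClosed_subset (U.isClosed_of_isOpen hUo) hUW, hUo⟩

end TopologicalGroup

namespace NoetherianLC

variable {G : Type*} [Group G] [TopologicalSpace G]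

theorem exists_maximal (hG : NoetherianLC G) {S : Set (Subgroup G)}
    (hS : ∀ H ∈ S, IsOpen (H : Set G)) (hne : S.Nonempty) :
    ∃ M ∈ S, ∀ H ∈ S, M ≤ H → H = M := by
  have : WellFoundedGT {H : Subgroup G // IsOpen (H : Set G)} :=
    wellFoundedGT_iff_monotone_chain_condition.mpr fun O => by
      obtain ⟨n, hn⟩ := hG ⟨fun n => (O n).1, fun _ _ h => O.mono h⟩ fun n => (O n).2
      exact ⟨n, fun m hm => Subtype.ext (hn m hm).symm⟩
  obtain ⟨H₀, hH₀⟩ := hne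
  obtain ⟨⟨M, _⟩, hM, hmax⟩ := wellFounded_gt.has_min
    {H : {H : Subgroup G // IsOpen (H : Set G)} | H.1 ∈ S} ⟨⟨H₀, hS H₀ hH₀⟩, hH₀⟩
  exact ⟨M, hM, fun H hH hMH => (hMH.eq_of_not_lt (hmax ⟨H, hS H hH⟩ hH)).symm⟩

theorem exists_normal_mem (hG : NoetherianLC G) {S : Set (Subgroup G)}
    (hS : ∀ H ∈ S, IsOpen (H : Set G)) (hne : S.Nonempty)
    (hsup : ∀ M₁ ∈ S, ∀ M₂ ∈ S, M₁ ⊔ M₂ ∈ S)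
    (hconj : ∀ M ∈ S, ∀ g : G, M.comap (MulAut.conj g).toMonoidHom ∈ S) :
    ∃ M ∈ S, M.Normal := by
  obtain ⟨M, hM, hmax⟩ := hG.exists_maximal hS hne
  have hgreatest : ∀ H ∈ S, H ≤ M := fun H hH => by
    rw [← hmax _ (hsup M hM H hH) le_sup_left]
    exact le_sup_right
  refine ⟨M, hM, ⟨fun n hn g => hgreatest _ (hconj M hM g⁻¹) ?_⟩⟩
  simpa [mul_assoc] using hn

variable [IsTopologicalGroup G]

theorem exists_finite_sup_closure_eq (hG : NoetherianLC G) {U : Subgroup G}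
    (hU : IsOpen (U : Set G)) (Y : Subgroup G) :
    ∃ F : Set G, F.Finite ∧ F ⊆ Y ∧ U ⊔ Subgroup.closure F = U ⊔ Y := by
  obtain ⟨_, ⟨F, hF, hFY, rfl⟩, hmax⟩ := hG.exists_maximal
    (S := {H | ∃ F : Set G, F.Finite ∧ F ⊆ Y ∧ H = U ⊔ Subgroup.closure F})
    (by rintro _ ⟨F, -, -, rfl⟩; exact Subgroup.isOpen_mono le_sup_left hU)
    ⟨_, ∅, Set.finite_empty, Set.empty_subset _, rfl⟩
  have hY : Y ≤ U ⊔ Subgroup.closure F := fun y hy => by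
    rw [← hmax _ ⟨insert y F, hF.insert y, Set.insert_subset hy hFY, rfl⟩
      (sup_le_sup_left (Subgroup.closure_mono (Set.subset_insert y F)) U)]
    exact Subgroup.mem_sup_right (Subgroup.subset_closure (Set.mem_insert y F))
  exact ⟨F, hF, hFY, le_antisymm (sup_le_sup_left ((Subgroup.closure_le Y).mpr hFY) U)
    (sup_le le_sup_left hY)⟩

theorem exists_isOpen_normalized_le_sup (hG : NoetherianLC G) {U Y N : Subgroup G}
    (hUc : IsCompact (U : Set G)) (hUo : IsOpen (U : Set G)) (hUY : U ≤ Subgroup.normalizer Y)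
    (hN : U ⊔ Y ≤ Subgroup.normalizer N) (hYN : ∀ᶠ x in 𝓝 (1 : G), x ∈ Y → x ∈ N) :
    ∃ K : Subgroup G, IsOpen (K : Set G) ∧ N ≤ K ∧ K ≤ U ⊔ N ∧
      U ⊔ Y ≤ Subgroup.normalizer K := by
  obtain ⟨F, hF, hFY, hUF⟩ := hG.exists_finite_sup_closure_eq hUo Y
  set O := Set.image2 (fun u f => u * f * u⁻¹) (U : Set G) F with hO
  have hOc : IsCompact O := by
    rw [hO, ← Set.image_prod]
    exact (hUc.prod hF.isCompact).image (by fun_prop)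
  have hOY : O ⊆ Y := Set.image2_subset_iff.mpr fun u hu f hf => (hUY hu f).mp (hFY hf)
  have hON : ∀ o ∈ O, o ∈ Subgroup.normalizer N :=
    fun o ho => hN (Subgroup.mem_sup_right (hOY ho))
  set E := Subgroup.closure ((N : Set G) ∪ O)
  have hUE : U ≤ Subgroup.normalizer E := Subgroup.le_normalizer_closure_iff.mpr <| by
    rintro u hu _ (hn | ⟨v, hv, f, hf, rfl⟩)
    · exact Subgroup.subset_closure (Or.inl ((hN (Subgroup.mem_sup_left hu) _).mp hn))
    · exact Subgroup.subset_closure (Or.inr ⟨u * v, mul_mem hu hv, f, hf, by group⟩)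
  have hFE : Subgroup.closure F ≤ E :=
    Subgroup.closure_mono fun f hf => Or.inr ⟨1, one_mem U, f, hf, by simp⟩
  have hYE : Y ≤ U ⊔ E := le_sup_right.trans (hUF.symm.le.trans (sup_le_sup_left hFE U))
  have hcover : ((U ⊔ Y : Subgroup G) : Set G) ⊆ E * U := by
    rw [← Subgroup.coe_mul_of_right_le_normalizer_left E U hUE, sup_comm E]
    exact sup_le le_sup_left hYE
  set K₀ := (U ⊔ N) ⊓ centralizerMod N O
  have hNK₀ : N ≤ K₀ := le_inf le_sup_right (le_centralizerMod hON)
  have hK₀o : IsOpen (K₀ : Set G) := Subgroup.isOpen_mono (inf_le_inf_right _ le_sup_left)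
    (isOpen_inf_centralizerMod hUo (le_sup_left.trans hN) hUY hOc hOY hYN)
  have hEK₀ : E ≤ Subgroup.normalizer K₀ := by
    refine (Subgroup.closure_le _).mpr ?_
    rintro s (hs | hs)
    · exact Subgroup.le_normalizer (hNK₀ hs)
    · exact mem_normalizer_of_commutator_mem hNK₀ (hON s hs) fun k hk =>
        (mem_centralizerMod.mp hk.2).2 s hs
  exact ⟨relCore (U ⊔ Y) K₀, isOpen_relCore hK₀o hUc hcover hEK₀, le_relCore hNK₀ hN,
    (relCore_le _ _).trans inf_le_left, le_normalizer_relCore _ _⟩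

theorem exists_normal_isCompactMod_of_le_normalizer (hG : NoetherianLC G)
    {W Z M : Subgroup G} [hW : W.Normal] [hZ : Z.Normal] (hMo : IsOpen (M : Set G))
    (hZM : Z ≤ M) (hMW : M ≤ W) (hWM : W ≤ Subgroup.normalizer M)
    (hM : IsCompactMod (M : Set G) Z) :
    ∃ M' : Subgroup G, M'.Normal ∧ IsOpen (M' : Set G) ∧ Z ≤ M' ∧
      IsCompactMod (M' : Set G) Z := by
  set S := {M : Subgroup G | IsOpen (M : Set G) ∧ Z ≤ M ∧ M ≤ W ∧
    W ≤ Subgroup.normalizer M ∧ IsCompactMod (M : Set G) Z}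
  have hsup : ∀ M₁ ∈ S, ∀ M₂ ∈ S, M₁ ⊔ M₂ ∈ S := by
    rintro M₁ ⟨h₁o, hZ₁, hW₁, h₁W, h₁⟩ M₂ ⟨-, -, hW₂, h₂W, h₂⟩
    exact ⟨Subgroup.isOpen_mono le_sup_left h₁o, hZ₁.trans le_sup_left, sup_le hW₁ hW₂,
      le_normalizer_sup h₁W h₂W, h₁.sup h₂ (hW₁.trans h₂W)⟩
  have hconj : ∀ M ∈ S, ∀ g : G, M.comap (MulAut.conj g).toMonoidHom ∈ S := by
    rintro M ⟨hMo, hZM, hMW, hWM, hM⟩ g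
    have hmem : ∀ x, x ∈ M.comap (MulAut.conj g).toMonoidHom ↔ g * x * g⁻¹ ∈ M :=
      fun _ => Iff.rfl
    refine ⟨hMo.preimage (show Continuous fun x => g * x * g⁻¹ by fun_prop),
      fun z hz => (hmem z).mpr (hZM (hZ.conj_mem z hz g)), fun x hx => ?_,
      Subgroup.le_normalizer_iff.mpr fun w hw x hx => ?_, hM.comap_conj g⟩
    · simpa [mul_assoc] using hW.conj_mem _ (hMW ((hmem x).mp hx)) g⁻¹
    · have : g * (w * x * w⁻¹) * g⁻¹ = (g * w * g⁻¹) * (g * x * g⁻¹) * (g * w * g⁻¹)⁻¹ := by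
        group
      exact (hmem _).mpr (this ▸ (hWM (hW.conj_mem w hw g) _).mp ((hmem x).mp hx))
  obtain ⟨M', ⟨hM'o, hZM', -, -, hM'⟩, hM'n⟩ := hG.exists_normal_mem (fun _ h => h.1)
    ⟨M, show M ∈ S from ⟨hMo, hZM, hMW, hWM, hM⟩⟩ hsup hconj
  exact ⟨M', hM'n, hM'o, hZM', hM'⟩

theorem exists_normal_isCompactMod_of_commutator_le (hG : NoetherianLC G)
    {U W Y Z : Subgroup G} [W.Normal] [Y.Normal] [Z.Normal] (hUc : IsCompact (U : Set G))
    (hUo : IsOpen (U : Set G)) (hWo : IsOpen (W : Set G)) (hYW : Y ≤ W) (hZY : Z ≤ Y)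
    (hYZ : ⁅Y, Y⁆ ≤ Z) (hW : IsCompactMod (W : Set G) Y) :
    ∃ M : Subgroup G, M.Normal ∧ IsOpen (M : Set G) ∧ Z ≤ M ∧ IsCompactMod (M : Set G) Z := by
  obtain ⟨C, hC, hWC⟩ := hW
  rw [Subgroup.set_mul_normal_comm] at hWC
  set U' := U ⊓ W
  have hU'c : IsCompact (U' : Set G) := hUc.inter_right (W.isClosed_of_isOpen hWo)
  have hU'o : IsOpen (U' : Set G) := hUo.inter hWo
  set A := (U' ⊓ Y) ⊔ Z
  have hAY : A ≤ Y := sup_le inf_le_right hZY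
  have hYA : Y ≤ Subgroup.normalizer A := Subgroup.le_normalizer_iff_commutator_le_left.mpr
    ((Subgroup.commutator_mono hAY le_rfl).trans (hYZ.trans le_sup_right))
  set N := relCore W A
  have hYN : ∀ᶠ x in 𝓝 (1 : G), x ∈ Y → x ∈ N := eventually_mem_relCore hC hWC hYA <| by
    filter_upwards [hU'o.mem_nhds (one_mem U')] with x hx hxY
    exact Subgroup.mem_sup_left ⟨hx, hxY⟩
  obtain ⟨K, hKo, hNK, hKU'N, hK⟩ := hG.exists_isOpen_normalized_le_sup hU'c hU'o
    Subgroup.le_normalizer_of_normal ((sup_le inf_le_right hYW).trans (le_normalizer_relCore W A))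
    hYN
  have hWK : (W : Set G) ⊆ (U' ⊔ Y : Subgroup G) * C :=
    hWC.trans (Set.mul_subset_mul_right (SetLike.coe_subset_coe.mpr le_sup_right))
  have hZK : Z ≤ K := (le_relCore le_sup_right Subgroup.le_normalizer_of_normal).trans hNK
  have hKW : K ≤ W := hKU'N.trans (sup_le inf_le_right ((relCore_le W A).trans (hAY.trans hYW)))
  have hKU'Z : K ≤ U' ⊔ Z := hKU'N.trans (sup_le le_sup_left
    ((relCore_le W A).trans (sup_le (inf_le_left.trans le_sup_left) le_sup_right)))
  exact hG.exists_normal_isCompactMod_of_le_normalizer (W := W) (isOpen_relCore hKo hC hWK hK)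
    (le_relCore hZK Subgroup.le_normalizer_of_normal) ((relCore_le W K).trans hKW)
    (le_normalizer_relCore W K) (isCompactMod_of_le_sup hU'c ((relCore_le W K).trans hKU'Z))

theorem exists_normal_isCompactMod_derivedSeries (hG : NoetherianLC G) {U : Subgroup G}
    (hUc : IsCompact (U : Set G)) (hUo : IsOpen (U : Set G)) (n : ℕ) :
    ∃ W : Subgroup G, W.Normal ∧ IsOpen (W : Set G) ∧ derivedSeries G n ≤ W ∧
      IsCompactMod (W : Set G) (derivedSeries G n) := by
  induction n with
  | zero => exact ⟨⊤, inferInstance, by simp, le_top, {1}, isCompact_singleton, by simp⟩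
  | succ n ih =>
    obtain ⟨W, _, hWo, hW, hWc⟩ := ih
    exact hG.exists_normal_isCompactMod_of_commutator_le hUc hUo hWo hW
      (derivedSeries_antitone G n.le_succ) (derivedSeries_succ G n).ge hWc

end NoetherianLC

/-- A solvable Noetherian totally disconnected locally compact group admits a compact open
normal subgroup. -/
theorem exists_compact_open_normal_of_solvable_noetherian_tdlc
    {G : Type*} [Group G] [TopologicalSpace G] [IsTopologicalGroup G]
    [LocallyCompactSpace G] [T2Space G] [TotallyDisconnectedSpace G]
    [Group.IsSolvable G] (hnoeth : NoetherianLC G) :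
    ∃ K : Subgroup G, K.Normal ∧ IsCompact (K : Set G) ∧ IsOpen (K : Set G) := by
  obtain ⟨U, hUc, hUo⟩ := exists_isCompact_isOpen_subgroup (G := G)
  obtain ⟨n, hn⟩ := Group.IsSolvable.solvable (G := G)
  obtain ⟨W, hWn, hWo, -, hW⟩ := hnoeth.exists_normal_isCompactMod_derivedSeries hUc hUo n
  rw [hn] at hW
  exact ⟨W, hWn, hW.isCompact_of_bot (W.isClosed_of_isOpen hWo), hWo⟩
end

section
/- Property (M) is inherited by central extensions: if G̃ is a locally compact group and Z is a closed subgroup of G̃ contained in the center of G̃ such that the quotient G̃/Z has property (M), then G̃ has property (M). -/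
/-!
Let `H` be a closed subgroup of finite covolume and `L` the closure of `Z H`. The invariant measure
on `G ⧸ H` pushes forward to `(G ⧸ Z) ⧸ (L / Z)`, so property (M) of `G ⧸ Z` makes `G ⧸ L`
compact: `G = C L` with `C` compact. Put `C` inside an open σ-compact subgroup `G₀`; then
`G = G₀ Z H`, so the central elements permute the open `G₀`-orbits of `G ⧸ H` transitively. A
Vitali argument on the group indexing these orbits shows there are finitely many of them, hence
`G ⧸ H` is σ-compact and some compact `K` has `μ (K H / H) > 0`. Since infinitely many pairwise
disjoint central translates of `K H / H` would have infinite total measure, the centre, and with it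
`L`, lies in `B H` for a compact `B`. Therefore `G = C B H` and `G ⧸ H` is compact.
-/

open MeasureTheory

def HasFiniteCovolume {G : Type*} [Group G] [TopologicalSpace G] (H : Subgroup G) : Prop :=
  letI : MeasurableSpace (G ⧸ H) := borel (G ⧸ H)
  ∃ μ : Measure (G ⧸ H), IsProbabilityMeasure μ ∧
    ∀ g : G, Measure.map (fun x : G ⧸ H => g • x) μ = μ

def IsCocompactSubgroup {G : Type*} [Group G] [TopologicalSpace G] (H : Subgroup G) : Prop :=
  IsCompact (Set.univ : Set (G ⧸ H))

/-- A locally compact group has property (M) if every closed subgroup of finite covolume is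
cocompact. -/
def PropertyM (G : Type*) [Group G] [TopologicalSpace G] : Prop :=
  ∀ H : Subgroup G, IsClosed (H : Set G) → HasFiniteCovolume H → IsCocompactSubgroup H

open Set
open scoped Pointwise

/-- Vitali's argument: a countably infinite subgroup has a fundamental domain whose translates are
disjoint and of equal positive measure, yet sum to the finite `μ univ`. -/
theorem finite_of_isMulLeftInvariant {Q : Type*} [Group Q] [MeasurableSpace Q]
    [DiscreteMeasurableSpace Q] (μ : Measure Q) [IsFiniteMeasure μ] [NeZero μ]
    [μ.IsMulLeftInvariant] : Finite Q := by
  by_contra hQ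
  have : Infinite Q := not_finite_iff_infinite.mp hQ
  let e := Infinite.natEmbedding Q
  let Λ := (FreeGroup.lift e).range
  have : Countable Λ := (countable_range (FreeGroup.lift e)).to_subtype
  have : Infinite Λ :=
    Infinite.of_injective (fun n => ⟨e n, FreeGroup.of n, FreeGroup.lift_apply_of⟩)
      fun _ _ h => e.injective (congrArg Subtype.val h)
  let s := range (Quotient.out : MulAction.orbitRel.Quotient Λ Q → Q)
  have hs : IsFundamentalDomain Λ s μ := by
    refine .mk' MeasurableSet.of_discrete.nullMeasurableSet fun x => ?_
    obtain ⟨l, hl⟩ :=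
      MulAction.orbitRel_apply.mp (Quotient.mk_out (s := MulAction.orbitRel Λ Q) x)
    refine ⟨l, ⟨_, hl.symm⟩, ?_⟩
    rintro l' ⟨c, hc⟩
    obtain rfl : c = Quotient.mk _ x := by
      rw [← Quotient.out_eq c, hc]
      exact Quotient.sound (MulAction.orbitRel_apply.mpr (MulAction.mem_orbit _ _))
    exact Subtype.ext (mul_right_cancel (hc.symm.trans hl.symm))
  have h := hs.measure_eq_tsum univ
  simp only [smul_set_univ, univ_inter,
    ENNReal.tsum_const_eq_top_of_ne_zero (hs.measure_ne_zero (NeZero.ne μ))] at h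
  exact measure_ne_top μ univ h

section Translates

variable {Γ X : Type*} [Group Γ] [MulAction Γ X] {U : Set X}

theorem mk_eq_of_mem_smul_of_mem_smul
    (hU : ∀ γ : Γ, (γ • U ∩ U).Nonempty → γ • U = U) {x : X} {γ γ' : Γ}
    (hx : x ∈ γ • U) (hx' : x ∈ γ' • U) :
    (γ : Γ ⧸ MulAction.stabilizer Γ U) = γ' := by
  rw [QuotientGroup.eq, MulAction.mem_stabilizer_iff]
  refine hU _ ⟨γ⁻¹ • x, ?_, mem_smul_set_iff_inv_smul_mem.mp hx⟩
  rw [← smul_smul]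
  exact smul_mem_smul_set hx'

theorem finite_quotient_stabilizer [IsMulCommutative Γ] [MeasurableSpace X]
    (μ : Measure X) [IsFiniteMeasure μ] [NeZero μ] [SMulInvariantMeasure Γ X μ]
    (hcover : ∀ x, ∃ γ : Γ, x ∈ γ • U) (hU : ∀ γ : Γ, (γ • U ∩ U).Nonempty → γ • U = U)
    (hmeas : ∀ S : Set Γ, MeasurableSet (⋃ γ ∈ S, γ • U)) :
    Finite (Γ ⧸ MulAction.stabilizer Γ U) := by
  let Q := Γ ⧸ MulAction.stabilizer Γ U
  choose w hw using hcover
  let θ : X → Q := fun x => w x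
  have hθ : ∀ {x : X} {γ : Γ}, x ∈ γ • U → θ x = γ := fun hx =>
    mk_eq_of_mem_smul_of_mem_smul hU (hw _) hx
  let : MeasurableSpace Q := ⊤
  have : DiscreteMeasurableSpace Q := ⟨fun _ => trivial⟩
  have hθm : Measurable θ := fun A _ => by
    convert hmeas {γ | (γ : Q) ∈ A} using 1
    ext x
    simp only [mem_preimage, mem_iUnion, mem_ofPred_eq, exists_prop]
    exact ⟨fun hx => ⟨w x, hx, hw x⟩, fun ⟨γ, hγ, hx⟩ => hθ hx ▸ hγ⟩
  have hθsmul : ∀ (γ : Γ) x, θ (γ • x) = γ * θ x := fun γ x =>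
    hθ (by rw [mul_smul]; exact smul_mem_smul_set (hw x))
  have : NeZero (μ.map θ) := ⟨by
    rw [← Measure.measure_univ_ne_zero, Measure.map_apply hθm MeasurableSet.univ]
    exact Measure.measure_univ_ne_zero.mpr (NeZero.ne μ)⟩
  have : (μ.map θ).IsMulLeftInvariant := ⟨fun q => by
    obtain ⟨γ, rfl⟩ := QuotientGroup.mk_surjective q
    ext A -
    have : ((γ : Q) * ·) ∘ θ = θ ∘ (γ • ·) := funext fun x => (hθsmul γ x).symm
    rw [Measure.map_map (measurable_const_mul _) hθm, Measure.map_apply (by fun_prop) .of_discrete,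
      Measure.map_apply hθm .of_discrete, this, preimage_comp, measure_preimage_smul]⟩
  exact finite_of_isMulLeftInvariant (μ.map θ)

theorem exists_finset_iUnion_smul_eq_univ [IsMulCommutative Γ] [MeasurableSpace X]
    (μ : Measure X) [IsFiniteMeasure μ] [NeZero μ] [SMulInvariantMeasure Γ X μ]
    (hcover : ∀ x, ∃ γ : Γ, x ∈ γ • U) (hU : ∀ γ : Γ, (γ • U ∩ U).Nonempty → γ • U = U)
    (hmeas : ∀ S : Set Γ, MeasurableSet (⋃ γ ∈ S, γ • U)) :
    ∃ F : Finset Γ, ⋃ γ ∈ F, γ • U = univ := by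
  have := finite_quotient_stabilizer μ hcover hU hmeas
  refine ⟨(finite_range (Quotient.out : Γ ⧸ MulAction.stabilizer Γ U → Γ)).toFinset,
    eq_univ_of_forall fun x => ?_⟩
  obtain ⟨γ, hx⟩ := hcover x
  set q : Γ ⧸ MulAction.stabilizer Γ U := QuotientGroup.mk γ
  refine mem_biUnion ((Finite.mem_toFinset _).mpr (mem_range_self q)) ?_
  have hstab := MulAction.mem_stabilizer_iff.mp (QuotientGroup.eq.mp (QuotientGroup.out_eq' q))
  have hx' : x ∈ q.out • ((q.out⁻¹ * γ) • U) := by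
    rwa [smul_smul, mul_inv_cancel_left]
  rwa [hstab] at hx'

end Translates

theorem IsCompact.exists_isCompact_subset_image {X Y : Type*} [TopologicalSpace X]
    [TopologicalSpace Y] [WeaklyLocallyCompactSpace X] {f : X → Y} (hf : IsOpenMap f)
    {K : Set Y} (hK : IsCompact K) (hKf : K ⊆ range f) :
    ∃ C, IsCompact C ∧ K ⊆ f '' C := by
  choose N hN hxN using fun x : X => exists_compact_mem_nhds x
  obtain ⟨t, ht⟩ := hK.elim_finite_subcover (fun x => f '' interior (N x))
    (fun x => hf _ isOpen_interior) fun y hy => by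
      obtain ⟨x, rfl⟩ := hKf hy
      exact mem_iUnion.2 ⟨x, mem_image_of_mem f (mem_interior_iff_mem_nhds.2 (hxN x))⟩
  refine ⟨⋃ x ∈ t, N x, t.isCompact_biUnion fun x _ => hN x, ht.trans ?_⟩
  rw [image_iUnion₂]
  exact iUnion₂_mono fun x _ => image_mono interior_subset

theorem exists_isCompact_measure_image_ne_zero {X Y : Type*} [TopologicalSpace X]
    [TopologicalSpace Y] [WeaklyLocallyCompactSpace X] [SigmaCompactSpace Y] [MeasurableSpace Y]
    {f : X → Y} (hf : IsOpenMap f) (hsurj : Function.Surjective f) (μ : Measure Y) [NeZero μ] :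
    ∃ K, IsCompact K ∧ μ (f '' K) ≠ 0 := by
  obtain ⟨n, hn⟩ := exists_measure_pos_of_not_measure_iUnion_null (μ := μ)
    (s := compactCovering Y) <| by
      rw [iUnion_compactCovering]
      exact Measure.measure_univ_ne_zero.mpr (NeZero.ne μ)
  obtain ⟨K, hK, hsub⟩ := (isCompact_compactCovering Y n).exists_isCompact_subset_image hf
    (hsurj.range_eq ▸ subset_univ _)
  exact ⟨K, hK, (hn.trans_le (measure_mono hsub)).ne'⟩

theorem IsCompact.pow {M : Type*} [Monoid M] [TopologicalSpace M] [ContinuousMul M] {s : Set M}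
    (hs : IsCompact s) : ∀ n : ℕ, IsCompact (s ^ n)
  | 0 => by simp
  | n + 1 => by rw [pow_succ]; exact (hs.pow n).mul hs

section CosetSpace

variable {G : Type*} [Group G] {H G₀ : Subgroup G}

theorem smul_image_mk_subset {γ a b : G} (hγ : γ ∈ Subgroup.center G) (ha : a ∈ G₀)
    (hb : b ∈ G₀) (hab : γ • (a : G ⧸ H) = b) :
    γ • ((↑) '' (G₀ : Set G) : Set (G ⧸ H)) ⊆ (↑) '' (G₀ : Set G) := by
  rintro _ ⟨_, ⟨c, hc, rfl⟩, rfl⟩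
  refine ⟨c * a⁻¹ * b, G₀.mul_mem (G₀.mul_mem hc (G₀.inv_mem ha)) hb, QuotientGroup.eq.2 ?_⟩
  have hγc : c⁻¹ * γ * c = γ := by
    rw [mul_assoc, ← Subgroup.mem_center_iff.1 hγ c, inv_mul_cancel_left]
  have hγa : a * γ = γ * a := Subgroup.mem_center_iff.1 hγ a
  convert H.inv_mem (QuotientGroup.eq.1 hab) using 1
  calc (c * a⁻¹ * b)⁻¹ * (γ * c) = b⁻¹ * a * (c⁻¹ * γ * c) := by group
    _ = ((γ * a)⁻¹ * b)⁻¹ := by rw [hγc, mul_assoc, hγa]; group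

theorem smul_image_mk_eq_of_inter_nonempty {γ : G} (hγ : γ ∈ Subgroup.center G)
    (h : (γ • ((↑) '' (G₀ : Set G) : Set (G ⧸ H)) ∩ (↑) '' (G₀ : Set G)).Nonempty) :
    γ • ((↑) '' (G₀ : Set G) : Set (G ⧸ H)) = (↑) '' (G₀ : Set G) := by
  obtain ⟨_, ⟨_, ⟨a, ha, rfl⟩, rfl⟩, b, hb, hab⟩ := h
  exact (smul_image_mk_subset hγ ha hb hab.symm).antisymm <| subset_smul_set_iff.2 <|
    smul_image_mk_subset (Subgroup.inv_mem _ hγ) hb ha (inv_smul_eq_iff.2 hab)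

theorem mem_inv_mul_mul_of_smul_image_inter_nonempty {C : Set G} {x y : G}
    (hy : y ∈ Subgroup.center G)
    (h : (x • ((↑) '' C : Set (G ⧸ H)) ∩ y • (↑) '' C).Nonempty) :
    y ∈ C⁻¹ * {x} * C * H := by
  obtain ⟨_, ⟨_, ⟨c₁, hc₁, rfl⟩, rfl⟩, _, ⟨c₂, hc₂, rfl⟩, heq⟩ := h
  refine ⟨c₂⁻¹ * x * c₁, mul_mem_mul (mul_mem_mul (inv_mem_inv.2 hc₂) rfl) hc₁,
    _, QuotientGroup.eq.1 (heq.symm : ((x * c₁ : G) : G ⧸ H) = (y * c₂ : G)), ?_⟩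
  show c₂⁻¹ * x * c₁ * ((x * c₁)⁻¹ * (y * c₂)) = y
  simp only [mul_inv_rev, mul_assoc, mul_inv_cancel_left]
  rw [← Subgroup.mem_center_iff.1 hy, inv_mul_cancel_left]

variable [TopologicalSpace G]

theorem Subgroup.isClosed_map_of_ker_le {G' : Type*} [Group G'] [TopologicalSpace G']
    {f : G →* G'} (hf : Topology.IsQuotientMap f) {L : Subgroup G} (hL : IsClosed (L : Set G))
    (hker : f.ker ≤ L) : IsClosed (L.map f : Set G') := by
  rw [← hf.isClosed_preimage, ← Subgroup.coe_comap, Subgroup.comap_map_eq_self hker]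
  exact hL

theorem IsCompact.isCocompactSubgroup {K : Set G} (hK : IsCompact K)
    (hKH : K * (H : Set G) = univ) : IsCocompactSubgroup H := by
  have : (univ : Set (G ⧸ H)) = (↑) '' K := by
    refine (eq_univ_of_forall fun x => ?_).symm
    obtain ⟨g, rfl⟩ := QuotientGroup.mk_surjective x
    obtain ⟨k, hk, h, hh, rfl⟩ := hKH.symm ▸ mem_univ g
    exact ⟨k, hk, (QuotientGroup.mk_mul_of_mem k hh).symm⟩
  rw [IsCocompactSubgroup, this]
  exact hK.image QuotientGroup.continuous_mk

theorem exists_isCompact_mul_eq_univ_of_isCocompactSubgroup_map [WeaklyLocallyCompactSpace G]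
    {G' : Type*} [Group G'] [TopologicalSpace G'] [IsTopologicalGroup G'] {f : G →* G'}
    (hf : IsOpenMap f) (hsurj : Function.Surjective f) {L : Subgroup G} (hker : f.ker ≤ L)
    (hL : IsCocompactSubgroup (L.map f)) : ∃ C : Set G, IsCompact C ∧ C * (L : Set G) = univ := by
  obtain ⟨C, hC, hCu⟩ := IsCompact.exists_isCompact_subset_image
    (QuotientGroup.isOpenMap_coe.comp hf) hL fun x _ => by
      obtain ⟨g', rfl⟩ := QuotientGroup.mk_surjective x
      obtain ⟨g, rfl⟩ := hsurj g'
      exact mem_range_self g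
  refine ⟨C, hC, eq_univ_of_forall fun g => ?_⟩
  obtain ⟨c, hc, hcg⟩ := hCu (mem_univ (f g : G' ⧸ L.map f))
  have : c⁻¹ * g ∈ L := by
    rw [← Subgroup.comap_map_eq_self hker, Subgroup.mem_comap, map_mul, map_inv]
    exact QuotientGroup.eq.1 hcg
  exact ⟨c, hc, c⁻¹ * g, this, mul_inv_cancel_left c g⟩

end CosetSpace

section TopologicalGroup

variable {G : Type*} [Group G] [TopologicalSpace G] [IsTopologicalGroup G]

theorem Subgroup.isSigmaCompact_closure {K : Set G} (hK : IsCompact K) :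
    IsSigmaCompact (closure K : Set G) := by
  have hsymm : (K ∪ K⁻¹)⁻¹ = K ∪ K⁻¹ := by rw [union_inv, inv_inv, union_comm]
  have hpow : (closure K : Set G) = ⋃ n : ℕ, (K ∪ K⁻¹) ^ n := by
    refine Subset.antisymm (fun g hg => ?_) (iUnion_subset fun n => Subgroup.pow_subset ?_)
    · induction hg using closure_induction with
      | mem g hg => exact mem_iUnion.2 ⟨1, by simp [hg]⟩
      | one => exact mem_iUnion.2 ⟨0, by simp⟩
      | mul a b _ _ ha hb =>
        obtain ⟨m, ha⟩ := mem_iUnion.1 ha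
        obtain ⟨n, hb⟩ := mem_iUnion.1 hb
        exact mem_iUnion.2 ⟨m + n, pow_add (K ∪ K⁻¹) m n ▸ mul_mem_mul ha hb⟩
      | inv a _ ha =>
        obtain ⟨n, ha⟩ := mem_iUnion.1 ha
        exact mem_iUnion.2 ⟨n, by rw [← hsymm, inv_pow]; exact inv_mem_inv.2 ha⟩
    · exact union_subset subset_closure fun g hg => inv_mem_iff.1 (subset_closure hg)
  rw [hpow]
  exact isSigmaCompact_iUnion_of_isCompact _ (hK.union hK.inv).pow

theorem exists_isOpen_isSigmaCompact_subgroup_superset [WeaklyLocallyCompactSpace G]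
    {K : Set G} (hK : IsCompact K) :
    ∃ G₀ : Subgroup G, IsOpen (G₀ : Set G) ∧ IsSigmaCompact (G₀ : Set G) ∧ K ⊆ G₀ := by
  obtain ⟨V, hV, hV1⟩ := exists_compact_mem_nhds (1 : G)
  refine ⟨Subgroup.closure (V ∪ K), Subgroup.isOpen_of_mem_nhds _ (g := 1) ?_,
    Subgroup.isSigmaCompact_closure (hV.union hK), subset_union_right.trans Subgroup.subset_closure⟩
  exact Filter.mem_of_superset hV1 (subset_union_left.trans Subgroup.subset_closure)

theorem HasFiniteCovolume.of_map_le {G' : Type*} [Group G'] [TopologicalSpace G']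
    [IsTopologicalGroup G'] {f : G →* G'} (hf : Continuous f) (hsurj : Function.Surjective f)
    {H : Subgroup G} {H' : Subgroup G'} (hle : H.map f ≤ H') (hH : HasFiniteCovolume H) :
    HasFiniteCovolume H' := by
  let : MeasurableSpace (G ⧸ H) := borel _
  have : BorelSpace (G ⧸ H) := ⟨rfl⟩
  let : MeasurableSpace (G' ⧸ H') := borel _
  have : BorelSpace (G' ⧸ H') := ⟨rfl⟩
  obtain ⟨μ, hμ, hinv⟩ := hH
  let φ : G ⧸ H → G' ⧸ H' := Quotient.map' f fun a b hab => QuotientGroup.leftRel_apply.2 <|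
    hle ⟨_, QuotientGroup.leftRel_apply.1 hab, by simp⟩
  have hφ : Continuous φ := hf.quotient_map' _
  refine ⟨μ.map φ, Measure.isProbabilityMeasure_map hφ.aemeasurable, fun g' => ?_⟩
  obtain ⟨g, rfl⟩ := hsurj g'
  have hφg : (f g • ·) ∘ φ = φ ∘ (g • ·) :=
    funext fun x => Quotient.inductionOn' x fun a => by simp [φ]
  rw [Measure.map_map (by fun_prop) hφ.measurable, hφg,
    ← Measure.map_map hφ.measurable (by fun_prop), hinv]

variable {Z H G₀ : Subgroup G}

theorem sigmaCompactSpace_of_mul_center_mul_eq_univ (hG₀ : IsOpen (G₀ : Set G))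
    (hG₀σ : IsSigmaCompact (G₀ : Set G))
    (hcover : (G₀ : Set G) * (Subgroup.center G : Set G) * (H : Set G) = univ)
    [MeasurableSpace (G ⧸ H)] [BorelSpace (G ⧸ H)] (μ : Measure (G ⧸ H)) [IsFiniteMeasure μ]
    [NeZero μ] [SMulInvariantMeasure G (G ⧸ H) μ] : SigmaCompactSpace (G ⧸ H) := by
  let U : Set (G ⧸ H) := (↑) '' (G₀ : Set G)
  have : SMulInvariantMeasure (Subgroup.center G) (G ⧸ H) μ :=
    ⟨fun γ _ _ => measure_preimage_smul μ (γ : G) _⟩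
  obtain ⟨F, hF⟩ := exists_finset_iUnion_smul_eq_univ (Γ := Subgroup.center G) μ (U := U)
    (fun x => by
      obtain ⟨g, rfl⟩ := QuotientGroup.mk_surjective x
      obtain ⟨_, ⟨a, ha, z, hz, rfl⟩, h, hh, rfl⟩ := hcover.symm ▸ mem_univ g
      refine ⟨⟨z, hz⟩, a, ⟨a, ha, rfl⟩, ?_⟩
      rw [QuotientGroup.mk_mul_of_mem _ hh]
      show ((z * a : G) : G ⧸ H) = ((a * z : G) : G ⧸ H)
      rw [Subgroup.mem_center_iff.1 hz a])
    (fun γ h => smul_image_mk_eq_of_inter_nonempty γ.2 h)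
    (fun S => (isOpen_biUnion fun (γ : Subgroup.center G) _ =>
      (QuotientGroup.isOpenMap_coe _ hG₀).smul (γ : G)).measurableSet)
  rw [← isSigmaCompact_univ_iff, ← hF]
  exact isSigmaCompact_biUnion F.countable_toSet fun γ _ =>
    (hG₀σ.image QuotientGroup.continuous_mk).image (continuous_const_smul (γ : G))

theorem exists_isCompact_center_subset_mul (hH : IsClosed (H : Set G))
    [MeasurableSpace (G ⧸ H)] [BorelSpace (G ⧸ H)] (μ : Measure (G ⧸ H)) [IsFiniteMeasure μ]
    [SMulInvariantMeasure G (G ⧸ H) μ] {C : Set G} (hC : IsCompact C)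
    (hμC : μ ((↑) '' C) ≠ 0) :
    ∃ B : Set G, IsCompact B ∧ (Subgroup.center G : Set G) ⊆ B * H := by
  by_contra! hB
  have : IsClosed (H : Set G) := hH
  let K : Set (G ⧸ H) := (↑) '' C
  have hK : MeasurableSet K := (hC.image QuotientGroup.continuous_mk).isClosed.measurableSet
  have : Std.Symm fun x y : G => Disjoint (x • K) (y • K) := ⟨fun _ _ h => h.symm⟩
  obtain ⟨z, -, hz⟩ := exists_seq_of_forall_finset_exists' (· ∈ Subgroup.center G)
    (fun x y => Disjoint (x • K) (y • K)) fun s _ => by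
      have hBc : IsCompact (⋃ x ∈ s, C⁻¹ * {x} * C) :=
        s.isCompact_biUnion fun x _ => (hC.inv.mul isCompact_singleton).mul hC
      obtain ⟨y, hy, hyB⟩ := not_subset.1 (hB _ hBc)
      refine ⟨y, hy, fun x hx => not_not.1 fun hxy => hyB ?_⟩
      have hxs : C⁻¹ * {x} * C ⊆ ⋃ x ∈ s, C⁻¹ * {x} * C :=
        subset_iUnion₂ (s := fun x (_ : x ∈ s) => C⁻¹ * {x} * C) x hx
      exact mul_subset_mul_right hxs
        (mem_inv_mul_mul_of_smul_image_inter_nonempty hy (not_disjoint_iff_nonempty_inter.1 hxy))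
  have := tsum_measure_le_measure_univ (μ := μ)
    (fun n => (hK.const_smul (z n)).nullMeasurableSet) (hz.mono fun _ _ h => h.aedisjoint)
  simp only [measure_smul, ENNReal.tsum_const_eq_top_of_ne_zero (show μ K ≠ 0 from hμC),
    top_le_iff] at this
  exact measure_ne_top μ univ this

theorem mul_center_mul_eq_univ [Z.Normal] (hZ : Z ≤ Subgroup.center G)
    (hG₀ : IsOpen (G₀ : Set G)) {C : Set G} (hCG₀ : C ⊆ G₀)
    (hC : C * ((Z ⊔ H).topologicalClosure : Set G) = univ) :
    (G₀ : Set G) * (Subgroup.center G : Set G) * (H : Set G) = univ := by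
  refine eq_univ_of_univ_subset ?_
  rw [← hC, Subgroup.topologicalClosure_coe]
  calc C * closure ((Z ⊔ H : Subgroup G) : Set G)
      ⊆ (G₀ : Set G) * closure ((Z ⊔ H : Subgroup G) : Set G) := mul_subset_mul_right hCG₀
    _ = (G₀ : Set G) * ((Z : Set G) * H) := by rw [hG₀.mul_closure, Subgroup.normal_mul]
    _ ⊆ (G₀ : Set G) * (Subgroup.center G : Set G) * H := by
        rw [mul_assoc]
        exact mul_subset_mul_left (mul_subset_mul_right hZ)

theorem topologicalClosure_sup_subset_mul [Z.Normal] (hZ : Z ≤ Subgroup.center G)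
    (hH : IsClosed (H : Set G)) {B : Set G} (hB : IsCompact B)
    (hBH : (Subgroup.center G : Set G) ⊆ B * H) :
    ((Z ⊔ H).topologicalClosure : Set G) ⊆ B * H := by
  rw [Subgroup.topologicalClosure_coe]
  refine closure_minimal ?_ (hH.mul_left_of_isCompact hB)
  calc ((Z ⊔ H : Subgroup G) : Set G) = Z * H := Subgroup.normal_mul Z H
    _ ⊆ B * H * H := mul_subset_mul_right (subset_trans (α := Set G) hZ hBH)
    _ = B * H := by rw [mul_assoc, coe_mul_coe]

end TopologicalGroup

theorem propertyM_of_central_extension_general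
    {G : Type*} [Group G] [TopologicalSpace G] [IsTopologicalGroup G]
    [LocallyCompactSpace G]
    (Z : Subgroup G) [Z.Normal] (hZcentral : Z ≤ Subgroup.center G)
    (hquot : PropertyM (G ⧸ Z)) :
    PropertyM G := by
  intro H hHcl hH
  let : MeasurableSpace (G ⧸ H) := borel _
  have : BorelSpace (G ⧸ H) := ⟨rfl⟩
  obtain ⟨μ, hμ, hinv⟩ := id hH
  have : SMulInvariantMeasure G (G ⧸ H) μ := ((smulInvariantMeasure_tfae G μ).out 0 5).2 hinv
  let L := (Z ⊔ H).topologicalClosure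
  have hker : (QuotientGroup.mk' Z).ker ≤ L := by
    rw [QuotientGroup.ker_mk']
    exact le_sup_left.trans (Z ⊔ H).le_topologicalClosure
  have hL : IsCocompactSubgroup (L.map (QuotientGroup.mk' Z)) :=
    hquot _ (Subgroup.isClosed_map_of_ker_le (QuotientGroup.isQuotientMap_mk Z)
      (Subgroup.isClosed_topologicalClosure _) hker)
      (hH.of_map_le QuotientGroup.continuous_mk QuotientGroup.mk_surjective
        (Subgroup.map_mono (le_sup_right.trans (Z ⊔ H).le_topologicalClosure)))
  obtain ⟨C, hC, hCL⟩ := exists_isCompact_mul_eq_univ_of_isCocompactSubgroup_map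
    QuotientGroup.isOpenMap_coe QuotientGroup.mk_surjective hker hL
  obtain ⟨G₀, hG₀, hG₀σ, hCG₀⟩ := exists_isOpen_isSigmaCompact_subgroup_superset hC
  have := sigmaCompactSpace_of_mul_center_mul_eq_univ hG₀ hG₀σ
    (mul_center_mul_eq_univ hZcentral hG₀ hCG₀ hCL) μ
  obtain ⟨K, hK, hμK⟩ := exists_isCompact_measure_image_ne_zero QuotientGroup.isOpenMap_coe
    QuotientGroup.mk_surjective μ
  obtain ⟨B, hB, hBH⟩ := exists_isCompact_center_subset_mul hHcl μ hK hμK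
  refine (hC.mul hB).isCocompactSubgroup (eq_univ_of_univ_subset ?_)
  calc univ = C * (L : Set G) := hCL.symm
    _ ⊆ C * (B * H) :=
        mul_subset_mul_left (topologicalClosure_sup_subset_mul hZcentral hHcl hB hBH)
    _ = C * B * H := (mul_assoc _ _ _).symm

/-- Property (M) is inherited by central extensions: if `Z` is a closed central subgroup of
a locally compact group `G̃` such that `G̃/Z` has property (M), then `G̃` has property (M). -/
theorem propertyM_of_central_extension
    {G : Type*} [Group G] [TopologicalSpace G] [IsTopologicalGroup G]
    [LocallyCompactSpace G] [T2Space G]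
    (Z : Subgroup G) [Z.Normal] (hZcentral : Z ≤ Subgroup.center G)
    (hZcl : IsClosed (Z : Set G))
    (hquot : PropertyM (G ⧸ Z)) :
    PropertyM G :=
  propertyM_of_central_extension_general Z hZcentral hquot
end

section
/- Let G = G₁ × G₂ be the direct product of two locally compact groups, each having property (M). If G₁ is totally disconnected, then G has property (M). -/
/-!
Let `U` be a compact open subgroup of `G₁` (van Dantzig) and `W = U × G₂`, an open subgroup of
`G = G₁ × G₂`. For a closed subgroup `H` of finite covolume, the closure of the projection of `H`
to `G₁` has finite covolume, hence is cocompact, so `W` has finitely many orbits on `G ⧸ H`. One of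
them has positive measure, and since every conjugate of `W` is covered by finitely many cosets of
`W`, all of them do. The invariant measure restricted to an orbit `W • x` of positive measure shows
that the stabilizer of `x` in `W` has finite covolume, and hence so does its projection `R` to
`G₂`, which is closed because `U` is compact. Property (M) of `G₂` gives `G₂ = C * R` with `C`
compact, so `W • x = (U × C) • x` is compact, and `G ⧸ H` is a finite union of compact orbits.
-/

open MeasureTheory

open Set Pointwise MulAction

section TopologicalGroup

variable {G : Type*} [Group G] [TopologicalSpace G] [IsTopologicalGroup G]

theorem exists_isOpen_isCompact_subgroup [LocallyCompactSpace G] [T2Space G]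
    [TotallyDisconnectedSpace G] :
    ∃ U : Subgroup G, IsOpen (U : Set G) ∧ IsCompact (U : Set G) := by
  obtain ⟨K, hK, h1K, -⟩ := exists_compact_subset isOpen_univ (mem_univ (1 : G))
  obtain ⟨V, hV, h1V, hVK⟩ :=
    loc_compact_Haus_tot_disc_of_zero_dim.mem_nhds_iff.1 (isOpen_interior.mem_nhds h1K)
  have hVc : IsCompact V := hK.of_isClosed_subset hV.1 (hVK.trans interior_subset)
  obtain ⟨N, hN, hNV⟩ := compact_open_separated_mul_left hVc hV.2 subset_rfl
  have hNU : N ∩ N⁻¹ ⊆ stabilizer G V := by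
    rintro g ⟨hg, hg'⟩
    have hgV : g • V ⊆ V := (smul_set_subset_mul hg).trans hNV
    have hgV' : g⁻¹ • V ⊆ V := (smul_set_subset_mul (mem_inv.1 hg')).trans hNV
    exact hgV.antisymm (subset_smul_set_iff.2 hgV')
  have hUo : IsOpen (stabilizer G V : Set G) :=
    Subgroup.isOpen_of_mem_nhds _
      (Filter.mem_of_superset (Filter.inter_mem hN (inv_mem_nhds_one G hN)) hNU)
  refine ⟨_, hUo, hVc.of_isClosed_subset (Subgroup.isClosed_of_isOpen _ hUo) fun g hg => ?_⟩
  rw [← mem_stabilizer_iff.1 hg]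
  simpa using smul_mem_smul_set (a := g) h1V

theorem IsCocompactSubgroup.exists_isCompact_inv_mul_mem [LocallyCompactSpace G] {K : Subgroup G}
    (hK : IsCocompactSubgroup K) : ∃ C : Set G, IsCompact C ∧ ∀ g : G, ∃ c ∈ C, c⁻¹ * g ∈ K := by
  choose N hNc hN using fun g : G => exists_compact_mem_nhds g
  obtain ⟨s, hs⟩ := hK.elim_finite_subcover (fun g => ((↑) : G → G ⧸ K) '' interior (N g))
    (fun g => QuotientGroup.isOpenMap_coe _ isOpen_interior)
    fun x _ => x.induction_on fun g => mem_iUnion.2 ⟨g, g, mem_interior_iff_mem_nhds.2 (hN g), rfl⟩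
  refine ⟨⋃ g ∈ s, N g, s.isCompact_biUnion fun g _ => hNc g, fun g => ?_⟩
  obtain ⟨t, hts, c, hc, hcg⟩ := mem_iUnion₂.1 (hs (mem_univ (g : G ⧸ K)))
  exact ⟨c, mem_biUnion hts (interior_subset hc), QuotientGroup.eq.1 hcg⟩

end TopologicalGroup

section Covolume

variable {G : Type*} [Group G] [TopologicalSpace G] [IsTopologicalGroup G] {H : Subgroup G}

theorem hasFiniteCovolume_iff [MeasurableSpace (G ⧸ H)] [BorelSpace (G ⧸ H)] :
    HasFiniteCovolume H ↔ ∃ μ : Measure (G ⧸ H), IsProbabilityMeasure μ ∧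
      SMulInvariantMeasure G (G ⧸ H) μ := by
  obtain rfl := BorelSpace.measurable_eq (α := G ⧸ H)
  exact exists_congr fun μ =>
    and_congr_right fun _ => ((smulInvariantMeasure_tfae G μ).out 0 5).symm

theorem HasFiniteCovolume.of_measure [MeasurableSpace (G ⧸ H)] [BorelSpace (G ⧸ H)]
    (μ : Measure (G ⧸ H)) [IsFiniteMeasure μ] [NeZero μ] [SMulInvariantMeasure G (G ⧸ H) μ] :
    HasFiniteCovolume H :=
  hasFiniteCovolume_iff.2 ⟨(μ univ)⁻¹ • μ, inferInstance, inferInstance⟩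

theorem HasFiniteCovolume.map {Q : Type*} [Group Q] [TopologicalSpace Q] [IsTopologicalGroup Q]
    {f : G →* Q} (hf : Continuous f) (hfs : Function.Surjective f) {K : Subgroup Q}
    (hHK : H.map f ≤ K) (hH : HasFiniteCovolume H) : HasFiniteCovolume K := by
  borelize (G ⧸ H) (Q ⧸ K)
  obtain ⟨μ, hμ, _⟩ := hasFiniteCovolume_iff.1 hH
  let φ : G ⧸ H → Q ⧸ K := Quotient.map' f fun a b hab => QuotientGroup.leftRel_apply.2 <| by
    simpa using hHK ⟨_, QuotientGroup.leftRel_apply.1 hab, rfl⟩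
  have hφ : Continuous φ := hf.quotient_map' _
  refine hasFiniteCovolume_iff.2
    ⟨μ.map φ, Measure.isProbabilityMeasure_map hφ.aemeasurable, ⟨fun q s hs => ?_⟩⟩
  obtain ⟨g, rfl⟩ := hfs q
  have hφg : φ ⁻¹' ((f g • ·) ⁻¹' s) = (g • ·) ⁻¹' (φ ⁻¹' s) := by
    ext x
    induction x using QuotientGroup.induction_on
    simp [φ]
  rw [Measure.map_apply hφ.measurable hs,
    Measure.map_apply hφ.measurable (measurable_const_smul _ hs), hφg, measure_preimage_smul]

end Covolume

theorem range_ofQuotientStabilizer {G X : Type*} [Group G] [MulAction G X] (x : X) :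
    range (ofQuotientStabilizer G x) = orbit G x :=
  (range_subset_iff.2 (ofQuotientStabilizer_mem_orbit G x)).antisymm fun _ ⟨g, hg⟩ => ⟨g, hg⟩

section Orbits

open Topology

variable {G : Type*} [Group G] [TopologicalSpace G] [IsTopologicalGroup G] {H W : Subgroup G}

theorem isOpenEmbedding_ofQuotientStabilizer (hW : IsOpen (W : Set G)) (x : G ⧸ H) :
    IsOpenEmbedding (ofQuotientStabilizer W x) := by
  have hcont : Continuous fun w : W => w • x := continuous_subtype_val.smul continuous_const
  have hopen : IsOpenMap fun w : W => w • x := by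
    induction x using QuotientGroup.induction_on with | H a =>
    exact (QuotientGroup.isOpenMap_coe.comp (isOpenMap_mul_right a)).comp hW.isOpenMap_subtype_val
  refine .of_continuous_injective_isOpenMap (hcont.quotient_liftOn' _)
    (injective_ofQuotientStabilizer W x) fun V hV => ?_
  rw [← QuotientGroup.mk_surjective.image_preimage V, image_image]
  exact hopen _ (hV.preimage QuotientGroup.continuous_mk)

theorem hasFiniteCovolume_stabilizer (hW : IsOpen (W : Set G)) [MeasurableSpace (G ⧸ H)]
    [BorelSpace (G ⧸ H)] (μ : Measure (G ⧸ H)) [IsFiniteMeasure μ]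
    [SMulInvariantMeasure G (G ⧸ H) μ] {x : G ⧸ H} (hx : μ (orbit W x) ≠ 0) :
    HasFiniteCovolume (stabilizer W x) := by
  borelize (W ⧸ stabilizer W x)
  set ι := ofQuotientStabilizer W x
  have hν : ∀ s, μ.comap ι s = μ (ι '' s) :=
    (isOpenEmbedding_ofQuotientStabilizer hW x).measurableEmbedding.comap_apply μ
  have : IsFiniteMeasure (μ.comap ι) := ⟨by rw [hν]; exact measure_lt_top _ _⟩
  have : NeZero (μ.comap ι) :=
    ⟨fun h => hx (by rw [← range_ofQuotientStabilizer, ← image_univ, ← hν, h, Measure.coe_zero,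
      Pi.zero_apply])⟩
  have : SMulInvariantMeasure W _ (μ.comap ι) := ((smulInvariantMeasure_tfae W _).out 0 4).2
    fun w s => by
      rw [hν, hν, image_smul_comm ι w s (ofQuotientStabilizer_smul W x w)]
      exact measure_smul μ (w : G) _
  exact .of_measure (μ.comap ι)

end Orbits

section OrbitMeasure

variable {G X : Type*} [Group G] [MulAction G X] [MeasurableSpace X] (μ : Measure X)
  [SMulInvariantMeasure G X μ] {W : Subgroup G}

theorem measure_orbit_smul_le {τ : G} {F : Finset G}
    (hF : ∀ w ∈ W, τ⁻¹ * w * τ ∈ (F : Set G) * W) (x : X) :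
    μ (orbit W (τ • x)) ≤ F.card * μ (orbit W x) := by
  have hcover : orbit W (τ • x) ⊆ ⋃ f ∈ F, (τ * f) • orbit W x := by
    rintro _ ⟨w, rfl⟩
    obtain ⟨f, hf, v, hv, hfv : f * v = τ⁻¹ * w * τ⟩ := hF w w.2
    refine mem_iUnion₂.2 ⟨f, hf, (⟨v, hv⟩ : W) • x, mem_orbit x _, ?_⟩
    show (τ * f) • (v • x) = (w : G) • τ • x
    rw [smul_smul, smul_smul, mul_assoc, hfv]
    group
  calc μ (orbit W (τ • x)) ≤ ∑ f ∈ F, μ ((τ * f) • orbit W x) :=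
        (measure_mono hcover).trans (measure_biUnion_finset_le _ _)
    _ = F.card * μ (orbit W x) := by simp [measure_smul]

theorem measure_orbit_ne_zero [IsPretransitive G X]
    (hW : ∀ τ : G, ∃ F : Finset G, ∀ w ∈ W, τ⁻¹ * w * τ ∈ (F : Set G) * W) {y : X}
    (hy : μ (orbit W y) ≠ 0) (x : X) : μ (orbit W x) ≠ 0 := by
  obtain ⟨τ, rfl⟩ := exists_smul_eq G x y
  obtain ⟨F, hF⟩ := hW τ
  intro hx
  exact hy (le_zero_iff.1 ((measure_orbit_smul_le μ hF x).trans_eq (by simp [hx])))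

end OrbitMeasure

section Comap

variable {G Q : Type*} [Group G] [Group Q] [TopologicalSpace Q] [IsTopologicalGroup Q]
  {f : G →* Q} {U : Subgroup Q}

theorem exists_finset_conj_mem_mul_comap (hf : Function.Surjective f) (hUo : IsOpen (U : Set Q))
    (hUc : IsCompact (U : Set Q)) (τ : G) :
    ∃ F : Finset G, ∀ w ∈ U.comap f, τ⁻¹ * w * τ ∈ (F : Set G) * U.comap f := by
  classical
  obtain ⟨F, hF⟩ := (hUc.image (f := fun u => (f τ)⁻¹ * u * f τ) (by fun_prop)).elim_finite_subcover
    (fun q : Q => q • (U : Set Q)) (fun q => hUo.smul q)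
    fun q _ => mem_iUnion.2 ⟨q, 1, U.one_mem, mul_one q⟩
  choose g hg using hf
  refine ⟨F.image g, fun w hw => ?_⟩
  obtain ⟨q, hq, u, hu, hqu : q * u = (f τ)⁻¹ * f w * f τ⟩ := mem_iUnion₂.1 (hF ⟨f w, hw, rfl⟩)
  refine ⟨g q, Finset.mem_coe.2 (Finset.mem_image_of_mem g hq), (g q)⁻¹ * (τ⁻¹ * w * τ), ?_,
    mul_inv_cancel_left _ _⟩
  simpa [hg, ← hqu] using hu

theorem exists_finset_mem_doubleCoset (hUo : IsOpen (U : Set Q)) {L : Subgroup Q}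
    (hL : IsCocompactSubgroup L.topologicalClosure) :
    ∃ T : Finset Q, ∀ q : Q, ∃ t ∈ T, q ∈ DoubleCoset.doubleCoset t U L := by
  obtain ⟨T, hT⟩ := hL.elim_finite_subcover
    (fun t : Q => ((↑) : Q → Q ⧸ L.topologicalClosure) '' ((· * t) '' U))
    (fun t => QuotientGroup.isOpenMap_coe _ (isOpenMap_mul_right t _ hUo))
    fun x _ => x.induction_on fun q => mem_iUnion.2 ⟨q, q, ⟨1, U.one_mem, one_mul q⟩, rfl⟩
  refine ⟨T, fun q => ?_⟩
  obtain ⟨t, ht, _, ⟨u, hu, rfl⟩, hq⟩ := mem_iUnion₂.1 (hT (mem_univ (q : Q ⧸ _)))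
  -- `U` is an open neighbourhood of `1`, so `U * t L` contains `closure (t L) = t (closure L)`.
  have hk : t * ((u * t)⁻¹ * q) ∈ closure (t • (L : Set Q)) := by
    rw [closure_smul]
    exact smul_mem_smul_set (QuotientGroup.eq.1 hq)
  obtain ⟨u', hu', _, ⟨l, hl, rfl⟩, h : u' * (t * l) = t * ((u * t)⁻¹ * q)⟩ :=
    closure_subset_mul_left_of_mem_nhds_one_of_inv _ (hUo.mem_nhds U.one_mem)
      (fun _ => U.inv_mem) hk
  refine ⟨t, ht, DoubleCoset.mem_doubleCoset.2 ⟨u * u', U.mul_mem hu hu', l, hl, ?_⟩⟩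
  calc q = u * (t * ((u * t)⁻¹ * q)) := by group
    _ = u * u' * t * l := by rw [← h]; group

theorem exists_finset_forall_mem_orbit_comap (hf : Function.Surjective f)
    (hUo : IsOpen (U : Set Q)) {H : Subgroup G}
    (hH : IsCocompactSubgroup (H.map f).topologicalClosure) :
    ∃ T : Finset G, ∀ x : G ⧸ H, ∃ t ∈ T, x ∈ orbit (U.comap f) (t : G ⧸ H) := by
  classical
  obtain ⟨T, hT⟩ := exists_finset_mem_doubleCoset hUo hH
  choose g hg using hf
  refine ⟨T.image g, fun x => x.induction_on fun a => ?_⟩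
  obtain ⟨t, ht, hat⟩ := hT (f a)
  obtain ⟨u, hu, _, ⟨h, hh, rfl⟩, hut⟩ := DoubleCoset.mem_doubleCoset.1 hat
  refine ⟨g t, Finset.mem_image_of_mem g ht, ⟨a * h⁻¹ * (g t)⁻¹, ?_⟩, ?_⟩
  · simpa [hg, hut] using hu
  · show ((a * h⁻¹ * (g t)⁻¹ * g t : G) : G ⧸ H) = a
    exact QuotientGroup.eq.2 (by simpa using hh)

end Comap

theorem IsClosed.image_snd_of_subset_prod {X Y : Type*} [TopologicalSpace X] [TopologicalSpace Y]
    {K : Set X} (hK : IsCompact K) {C : Set (X × Y)} (hC : IsClosed C) (hCK : C ⊆ K ×ˢ univ) :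
    IsClosed (Prod.snd '' C) := by
  have := isCompact_iff_compactSpace.1 hK
  have hC' : Prod.snd '' C = Prod.snd '' (Prod.map ((↑) : K → X) id ⁻¹' C) := by
    refine subset_antisymm (image_subset_iff.2 fun p hp => ⟨(⟨p.1, (hCK hp).1⟩, p.2), hp, rfl⟩) ?_
    rintro _ ⟨p, hp, rfl⟩
    exact ⟨_, hp, rfl⟩
  rw [hC']
  exact isClosedMap_snd_of_compactSpace _ (hC.preimage (by fun_prop))

section Product

variable {G₁ G₂ : Type*} [Group G₁] [Group G₂] {U : Subgroup G₁} {H : Subgroup (G₁ × G₂)}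

variable (U) in
def sndStabilizer (x : (G₁ × G₂) ⧸ H) : Subgroup G₂ :=
  (stabilizer (U.comap (MonoidHom.fst G₁ G₂)) x).map
    ((MonoidHom.snd G₁ G₂).comp (U.comap (MonoidHom.fst G₁ G₂)).subtype)

theorem orbit_comap_fst_eq_image {x : (G₁ × G₂) ⧸ H} {C : Set G₂}
    (hC : ∀ b : G₂, ∃ c ∈ C, c⁻¹ * b ∈ sndStabilizer U x) :
    orbit (U.comap (MonoidHom.fst G₁ G₂)) x = (· • x) '' ((U : Set G₁) ×ˢ C) := by
  refine subset_antisymm ?_ fun _ ⟨g, hg, hgx⟩ => ⟨⟨g, hg.1⟩, hgx⟩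
  rintro _ ⟨w, rfl⟩
  obtain ⟨c, hc, s, hs, hsc : (s : G₁ × G₂).2 = c⁻¹ * (w : G₁ × G₂).2⟩ := hC (w : G₁ × G₂).2
  refine ⟨(w * s⁻¹ : _), ⟨(w * s⁻¹).2, ?_⟩, ?_⟩
  · simpa [hsc] using hc
  · show ((w * s⁻¹ : _) : G₁ × G₂) • x = w • x
    rw [← Subgroup.smul_def]
    exact (mul_smul w s⁻¹ x).trans (congrArg (w • ·) (mem_stabilizer_iff.1 (inv_mem hs)))

variable [TopologicalSpace G₁] [IsTopologicalGroup G₁] [TopologicalSpace G₂] [IsTopologicalGroup G₂]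

theorem isClosed_sndStabilizer (hUo : IsOpen (U : Set G₁)) (hUc : IsCompact (U : Set G₁))
    (hH : IsClosed (H : Set (G₁ × G₂))) (x : (G₁ × G₂) ⧸ H) :
    IsClosed (sndStabilizer U x : Set G₂) := by
  have hR : (sndStabilizer U x : Set G₂) =
      Prod.snd '' ((U : Set G₁) ×ˢ univ ∩ (· • x) ⁻¹' {x}) := by
    ext b
    constructor
    · rintro ⟨s, hs, rfl⟩
      exact ⟨s, ⟨⟨s.2, trivial⟩, hs⟩, rfl⟩
    · rintro ⟨g, ⟨⟨hg, -⟩, hgx⟩, rfl⟩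
      exact ⟨⟨g, hg⟩, hgx, rfl⟩
  rw [hR]
  refine .image_snd_of_subset_prod hUc (.inter ((U.isClosed_of_isOpen hUo).prod isClosed_univ) ?_)
    inter_subset_left
  exact isClosed_singleton.preimage (continuous_id.smul continuous_const)

theorem isCompact_orbit_comap_fst [LocallyCompactSpace G₂] (h₂ : PropertyM G₂)
    (hUo : IsOpen (U : Set G₁)) (hUc : IsCompact (U : Set G₁)) (hH : IsClosed (H : Set (G₁ × G₂)))
    [MeasurableSpace ((G₁ × G₂) ⧸ H)] [BorelSpace ((G₁ × G₂) ⧸ H)] (μ : Measure ((G₁ × G₂) ⧸ H))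
    [IsFiniteMeasure μ] [SMulInvariantMeasure (G₁ × G₂) ((G₁ × G₂) ⧸ H) μ] {x : (G₁ × G₂) ⧸ H}
    (hx : μ (orbit (U.comap (MonoidHom.fst G₁ G₂)) x) ≠ 0) :
    IsCompact (orbit (U.comap (MonoidHom.fst G₁ G₂)) x) := by
  have hR : HasFiniteCovolume (sndStabilizer U x) :=
    (hasFiniteCovolume_stabilizer (hUo.preimage continuous_fst) μ hx).map
      (continuous_snd.comp continuous_subtype_val) (fun b => ⟨⟨(1, b), U.one_mem⟩, rfl⟩) le_rfl
  obtain ⟨C, hCc, hC⟩ :=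
    (h₂ _ (isClosed_sndStabilizer hUo hUc hH x) hR).exists_isCompact_inv_mul_mem
  rw [orbit_comap_fst_eq_image hC]
  exact (hUc.prod hCc).image (continuous_id.smul continuous_const)

end Product

theorem propertyM_prod_general
    {G₁ G₂ : Type*} [Group G₁] [TopologicalSpace G₁] [IsTopologicalGroup G₁]
    [LocallyCompactSpace G₁] [T2Space G₁]
    [Group G₂] [TopologicalSpace G₂] [IsTopologicalGroup G₂]
    [LocallyCompactSpace G₂]
    [TotallyDisconnectedSpace G₁]
    (h₁ : PropertyM G₁) (h₂ : PropertyM G₂) :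
    PropertyM (G₁ × G₂) := by
  intro H hH hcov
  obtain ⟨U, hUo, hUc⟩ := exists_isOpen_isCompact_subgroup (G := G₁)
  set W := U.comap (MonoidHom.fst G₁ G₂)
  have hfst : Function.Surjective (MonoidHom.fst G₁ G₂) := Prod.fst_surjective
  obtain ⟨T, hT⟩ := exists_finset_forall_mem_orbit_comap hfst hUo
    (h₁ _ (Subgroup.isClosed_topologicalClosure _) (hcov.map continuous_fst hfst
      (Subgroup.le_topologicalClosure _)))
  have hcover : univ ⊆ ⋃ t ∈ T, orbit W (t : (G₁ × G₂) ⧸ H) :=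
    fun x _ => let ⟨t, ht, hx⟩ := hT x; mem_iUnion₂.2 ⟨t, ht, hx⟩
  borelize ((G₁ × G₂) ⧸ H)
  obtain ⟨μ, _, _⟩ := hasFiniteCovolume_iff.1 hcov
  obtain ⟨t, -, ht⟩ : ∃ t ∈ T, μ (orbit W (t : (G₁ × G₂) ⧸ H)) ≠ 0 := by
    by_contra! h
    simpa using measure_mono_null hcover ((measure_biUnion_null_iff T.countable_toSet).2 h)
  have hcpt : ∀ x, IsCompact (orbit W x) := fun x =>
    isCompact_orbit_comap_fst h₂ hUo hUc hH μ
      (measure_orbit_ne_zero μ (exists_finset_conj_mem_mul_comap hfst hUo hUc) ht x)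
  exact (T.isCompact_biUnion fun t _ => hcpt t).of_isClosed_subset isClosed_univ hcover

/-- If `G₁` and `G₂` are locally compact groups with property (M) and `G₁` is totally
disconnected, then `G₁ × G₂` has property (M). -/
theorem propertyM_prod
    {G₁ G₂ : Type*} [Group G₁] [TopologicalSpace G₁] [IsTopologicalGroup G₁]
    [LocallyCompactSpace G₁] [T2Space G₁]
    [Group G₂] [TopologicalSpace G₂] [IsTopologicalGroup G₂]
    [LocallyCompactSpace G₂] [T2Space G₂]
    [TotallyDisconnectedSpace G₁]
    (h₁ : PropertyM G₁) (h₂ : PropertyM G₂) :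
    PropertyM (G₁ × G₂) :=
  propertyM_prod_general h₁ h₂
end

section
/- Let G be a compactly generated locally compact group admitting a closed cocompact normal subgroup N such that N has a compact subgroup V that is open in N and normal in N (i.e. G is {compact-by-discrete}-by-compact). Then G has property (M): every closed subgroup of finite covolume in G is cocompact. -/
open MeasureTheory

/-! Let `W` be the normal core of `V`. Writing `G = N * C` with `C` compact, an `x ∈ N` lies in
`W` as soon as all `c x c⁻¹`, `c ∈ C`, lie in `V`; by compactness of `C` this holds near `1`, so
`W` is open in `N`.
As `G` is compactly generated and `N` cocompact, `N` is generated by a compact set, so `N ⧸ W`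
is finitely generated and a neighbourhood `L` of `1` commutes with `N` modulo `W`. Writing
`g = c * n` then traps every commutator `⁅u, g⁆`, `u ∈ L`, in a fixed compact set `K`.

Now let `H` have finite covolume and put `B = (interior L) H / H`. If `g • B` meets `g' • B`,
then `g ∈ g' (L L⁻¹ K) H`; so if `G ⧸ H` were not compact one could choose any number of
pairwise disjoint translates of `B`, which has positive invariant measure, a contradiction. -/

open Filter Topology Pointwise Set
open scoped commutatorElement

section Generation

variable {G : Type*} [Group G]

lemma exists_mem_pow_of_mem_closure {S : Set G} (hS : S⁻¹ = S) {g : G}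
    (hg : g ∈ Subgroup.closure S) : ∃ n : ℕ, g ∈ S ^ n := by
  induction hg using Subgroup.closure_induction_right with
  | one => exact ⟨0, by simp⟩
  | mul_right _ _ s hs ih =>
    obtain ⟨n, hn⟩ := ih
    exact ⟨n + 1, by rw [pow_succ]; exact mul_mem_mul hn hs⟩
  | mul_inv_cancel _ _ s hs ih =>
    obtain ⟨n, hn⟩ := ih
    exact ⟨n + 1, by rw [pow_succ]; exact mul_mem_mul hn (hS ▸ inv_mem_inv.2 hs)⟩

/-- Schreier's lemma, with `C` in the role of a transversal. -/
lemma closure_inter_mul_mul_inv_eq (N : Subgroup G) {C S : Set G}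
    (hS : Subgroup.closure S = ⊤) (hSinv : S⁻¹ = S) (hS1 : 1 ∈ S) (hC1 : 1 ∈ C)
    (hNC : ∀ g : G, g ∈ (N : Set G) * C) :
    Subgroup.closure ((N : Set G) ∩ (C * S * C⁻¹)) = N := by
  set E := (N : Set G) ∩ (C * S * C⁻¹)
  have hstep : ∀ c ∈ C, ∀ s ∈ S, ∃ e ∈ Subgroup.closure E, ∃ c' ∈ C, c * s = e * c' := by
    intro c hc s hs
    obtain ⟨e, he, c', hc', hcs⟩ := hNC (c * s)
    refine ⟨e, Subgroup.subset_closure ⟨he, ?_⟩, c', hc', hcs.symm⟩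
    rw [eq_mul_inv_of_mul_eq hcs]
    exact mul_mem_mul (mul_mem_mul hc hs) (inv_mem_inv.2 hc')
  have hcoset : ∀ g : G, ∃ m ∈ Subgroup.closure E, ∃ c ∈ C, g = m * c := by
    intro g
    induction (hS ▸ Subgroup.mem_top g : g ∈ Subgroup.closure S)
      using Subgroup.closure_induction_right with
    | one => exact ⟨1, Subgroup.one_mem _, 1, hC1, by simp⟩
    | mul_right _ _ s hs ih =>
      obtain ⟨m, hm, c, hc, rfl⟩ := ih
      obtain ⟨e, he, c', hc', hcs⟩ := hstep c hc s hs
      exact ⟨m * e, mul_mem hm he, c', hc', by rw [mul_assoc, hcs, mul_assoc]⟩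
    | mul_inv_cancel _ _ s hs ih =>
      obtain ⟨m, hm, c, hc, rfl⟩ := ih
      obtain ⟨e, he, c', hc', hcs⟩ := hstep c hc s⁻¹ (hSinv ▸ inv_mem_inv.2 hs)
      exact ⟨m * e, mul_mem hm he, c', hc', by rw [mul_assoc, hcs, mul_assoc]⟩
  refine le_antisymm ((Subgroup.closure_le N).2 inter_subset_left) fun n hn => ?_
  obtain ⟨m, hm, c, hc, rfl⟩ := hcoset n
  have hcN : c ∈ N := by
    simpa using N.mul_mem (N.inv_mem ((Subgroup.closure_le N).2 inter_subset_left hm)) hn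
  have hcE : c ∈ E := ⟨hcN, by simpa using mul_mem_mul (mul_mem_mul hc hS1) (inv_mem_inv.2 hC1)⟩
  exact mul_mem hm (Subgroup.subset_closure hcE)

lemma mem_comap_centralizer_iff {W : Subgroup G} [W.Normal] {g x : G} :
    x ∈ (Subgroup.centralizer {(g : G ⧸ W)}).comap (QuotientGroup.mk' W) ↔ ⁅g, x⁆ ∈ W := by
  rw [← QuotientGroup.eq_one_iff ⁅g, x⁆, ← QuotientGroup.mk'_apply W ⁅g, x⁆,
    map_commutatorElement, commutatorElement_eq_one_iff_commute, Subgroup.mem_comap,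
    Subgroup.mem_centralizer_singleton_iff]
  exact eq_comm

end Generation

section Topology

variable {G : Type*} [Group G] [TopologicalSpace G]

lemma eventually_mem_of_isOpen_setOf_coe_mem {N V : Subgroup G}
    (hV : IsOpen {x : N | (x : G) ∈ V}) : ∀ᶠ x in 𝓝 (1 : G), x ∈ N → x ∈ V := by
  obtain ⟨u, hu, huV⟩ := (mem_nhds_subtype _ _ _).1
    (hV.mem_nhds (show (1 : N) ∈ {x : N | (x : G) ∈ V} from V.one_mem))
  filter_upwards [hu] with x hx hxN using huV (show (⟨x, hxN⟩ : N) ∈ Subtype.val ⁻¹' u from hx)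

variable [IsTopologicalGroup G]

lemma IsCompact.exists_symmetric_superset {S : Set G} (hS : IsCompact S) :
    ∃ T : Set G, IsCompact T ∧ T⁻¹ = T ∧ (1 : G) ∈ T ∧ S ⊆ T :=
  ⟨insert 1 (S ∪ S⁻¹), (hS.union hS.inv).insert 1, by simp [union_comm], mem_insert _ _,
    subset_union_left.trans (subset_insert _ _)⟩

lemma IsCompact.pow_s15 {S : Set G} (hS : IsCompact S) (n : ℕ) : IsCompact (S ^ n) := by
  induction n with
  | zero => simp
  | succ n ih => rw [pow_succ]; exact ih.mul hS

lemma sigmaCompactSpace_of_closure_eq_top {S : Set G} (hS : IsCompact S) (hSinv : S⁻¹ = S)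
    (hgen : Subgroup.closure S = ⊤) : SigmaCompactSpace G :=
  SigmaCompactSpace_iff_exists_compact_covering.2 ⟨(S ^ ·), hS.pow_s15,
    iUnion_eq_univ_iff.2 fun g => exists_mem_pow_of_mem_closure hSinv (hgen ▸ Subgroup.mem_top g)⟩

lemma exists_isCompact_forall_mem_mul [WeaklyLocallyCompactSpace G] (N : Subgroup G)
    (hN : IsCompact (univ : Set (G ⧸ N))) :
    ∃ C : Set G, IsCompact C ∧ ∀ g : G, g ∈ C * (N : Set G) := by
  obtain ⟨K, hK, hK1⟩ := exists_compact_mem_nhds (1 : G)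
  obtain ⟨t, ht⟩ := hN.elim_finite_subcover (fun x : G => ((↑) : G → G ⧸ N) '' (x • interior K))
    (fun x => QuotientGroup.isOpenMap_coe _ (isOpen_interior.smul x))
    fun q _ => by
      obtain ⟨x, rfl⟩ := QuotientGroup.mk_surjective q
      exact mem_iUnion.2 ⟨x, x, ⟨1, mem_interior_iff_mem_nhds.2 hK1, mul_one x⟩, rfl⟩
  refine ⟨⋃ x ∈ t, x • K, t.isCompact_biUnion fun x _ => hK.smul x, fun g => ?_⟩
  obtain ⟨x, hx, y, hy, hyg⟩ := mem_iUnion₂.1 (ht (mem_univ (g : G ⧸ N)))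
  exact ⟨y, mem_iUnion₂.2 ⟨x, hx, smul_set_mono interior_subset hy⟩, y⁻¹ * g,
    QuotientGroup.eq.1 hyg, mul_inv_cancel_left y g⟩

lemma eventually_mem_normalCore {N V : Subgroup G} [N.Normal] {C : Set G} (hC : IsCompact C)
    (hNC : ∀ g : G, g ∈ (N : Set G) * C) (hNV : ∀ n ∈ N, ∀ v ∈ V, n * v * n⁻¹ ∈ V)
    (hV : ∀ᶠ x in 𝓝 (1 : G), x ∈ N → x ∈ V) :
    ∀ᶠ x in 𝓝 (1 : G), x ∈ N → x ∈ V.normalCore := by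
  have hconj : ∀ᶠ x in 𝓝 (1 : G), ∀ c ∈ C, c * x * c⁻¹ ∈ N → c * x * c⁻¹ ∈ V :=
    hC.eventually_forall_of_forall_eventually fun c _ =>
      ((by fun_prop : Continuous fun z : G × G => z.2 * z.1 * z.2⁻¹).tendsto' (1, c) 1
        (by simp)).eventually hV
  filter_upwards [hconj] with x hx hxN g
  obtain ⟨n, hn, c, hc, rfl⟩ := hNC g
  simpa [mul_assoc] using hNV n hn _ (hx c hc (‹N.Normal›.conj_mem x hxN c))

/-- `E` is covered by finitely many cosets `j W`, and elements near `1` commute modulo `W` with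
each of the finitely many `j`. -/
lemma eventually_forall_commutator_mem {N W : Subgroup G} [N.Normal] [W.Normal] {E : Set G}
    (hE : IsCompact E) (hEN : Subgroup.closure E = N) (hW : ∀ᶠ x in 𝓝 (1 : G), x ∈ N → x ∈ W) :
    ∀ᶠ g in 𝓝 (1 : G), ∀ n ∈ N, ⁅g, n⁆ ∈ W := by
  have hEsub : E ⊆ N := hEN ▸ Subgroup.subset_closure
  obtain ⟨F, hFE, hEF⟩ := hE.elim_nhds_subcover (fun e => (e⁻¹ * ·) ⁻¹' {x | x ∈ N → x ∈ W})
    fun e _ => ((continuous_const_mul e⁻¹).tendsto' e 1 (inv_mul_cancel e)).eventually hW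
  have hF : ∀ᶠ g in 𝓝 (1 : G), ∀ j ∈ F, ⁅g, j⁆ ∈ N → ⁅g, j⁆ ∈ W :=
    (eventually_all_finset F).2 fun j _ =>
      ((by fun_prop : Continuous fun g : G => g * j * g⁻¹ * j⁻¹).tendsto' 1 1
        (by simp)).eventually hW
  filter_upwards [hF] with g hg
  set T := (Subgroup.centralizer {(g : G ⧸ W)}).comap (QuotientGroup.mk' W)
  have hET : E ⊆ T := by
    intro e he
    obtain ⟨j, hj, hje⟩ := mem_iUnion₂.1 (hEF he)
    have hjN : j ∈ N := hEsub (hFE j hj)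
    have hjT : j ∈ T := mem_comap_centralizer_iff.2
      (hg j hj (N.mul_mem (‹N.Normal›.conj_mem j hjN g) (N.inv_mem hjN)))
    have hw : j⁻¹ * e ∈ W := hje (N.mul_mem (N.inv_mem hjN) (hEsub he))
    have hwT : j⁻¹ * e ∈ T := mem_comap_centralizer_iff.2
      (W.mul_mem (‹W.Normal›.conj_mem _ hw g) (W.inv_mem hw))
    simpa using T.mul_mem hjT hwT
  exact fun n hn => mem_comap_centralizer_iff.1 ((Subgroup.closure_le T).2 hET (hEN ▸ hn))

lemma exists_isCompact_forall_commutator_mem [LocallyCompactSpace G] {N : Subgroup G}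
    {C W : Set G} (hC : IsCompact C) (hW : IsCompact W) (hCN : ∀ g : G, g ∈ C * (N : Set G))
    (hNW : ∀ᶠ u in 𝓝 (1 : G), ∀ n ∈ N, ⁅u, n⁆ ∈ W) :
    ∃ L ∈ 𝓝 (1 : G), IsCompact L ∧ ∃ K : Set G, IsCompact K ∧ ∀ u ∈ L, ∀ g : G, ⁅u, g⁆ ∈ K := by
  obtain ⟨L, hL, hLW, hLc⟩ := local_compact_nhds hNW
  refine ⟨L, hL, hLc, L * C * L⁻¹ * W * C⁻¹, (((hLc.mul hC).mul hLc.inv).mul hW).mul hC.inv,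
    fun u hu g => ?_⟩
  obtain ⟨c, hc, n, hn, rfl⟩ := hCN g
  have hcomm : ⁅u, c * n⁆ = u * c * u⁻¹ * ⁅u, n⁆ * c⁻¹ := by
    simp only [commutatorElement_def]; group
  rw [hcomm]
  exact mul_mem_mul (mul_mem_mul (mul_mem_mul (mul_mem_mul hu hc) (inv_mem_inv.2 hu))
    (hLW hu n hn)) (inv_mem_inv.2 hc)

end Topology

lemma measure_eq_zero_of_forall_exists_disjoint_smul (G : Type*) {X : Type*} [Group G]
    [MulAction G X] [MeasurableSpace X] [MeasurableConstSMul G X] (μ : Measure X)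
    [IsFiniteMeasure μ] [SMulInvariantMeasure G X μ] {B : Set X} (hB : MeasurableSet B)
    (hdisj : ∀ t : Finset G, ∃ g : G, Disjoint (g • B) (⋃ g' ∈ t, g' • B)) : μ B = 0 := by
  classical
  by_contra hB0
  have hgrow : ∀ n : ℕ, ∃ t : Finset G, n * μ B ≤ μ (⋃ g ∈ t, g • B) := by
    intro n
    induction n with
    | zero => exact ⟨∅, by simp⟩
    | succ n ih =>
      obtain ⟨t, ht⟩ := ih
      obtain ⟨g, hg⟩ := hdisj t
      refine ⟨insert g t, ?_⟩
      rw [Finset.set_biUnion_insert, measure_union hg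
        (t.measurableSet_biUnion fun g' _ => hB.const_smul g'), measure_smul, add_comm]
      push_cast
      rw [add_mul, one_mul]
      gcongr
  obtain ⟨n, hn⟩ := ENNReal.exists_nat_mul_gt hB0 (measure_ne_top μ univ)
  obtain ⟨t, ht⟩ := hgrow n
  exact (hn.trans_le (ht.trans (measure_mono (subset_univ _)))).false

section PropertyM

variable {G : Type*} [Group G]

lemma mk_mem_smul_image_of_mk_mul_eq {H : Subgroup G} {L K : Set G}
    (hLK : ∀ u ∈ L, ∀ g : G, ⁅u, g⁆ ∈ K) {g g' u u' : G} (hu : u ∈ L) (hu' : u' ∈ L)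
    (h : ((g * u : G) : G ⧸ H) = ((g' * u' : G) : G ⧸ H)) :
    (g : G ⧸ H) ∈ g' • (((↑) : G → G ⧸ H) '' (L * L⁻¹ * K)) := by
  set h₀ := (g' * u')⁻¹ * (g * u)
  have hh₀ : h₀ ∈ H := QuotientGroup.eq.1 h.symm
  -- `g = g' * (u' * u⁻¹ * ⁅u, h₀⁆) * h₀`
  refine ⟨_, ⟨u' * u⁻¹ * ⁅u, h₀⁆, mul_mem_mul (mul_mem_mul hu' (inv_mem_inv.2 hu))
    (hLK u hu h₀), rfl⟩, ?_⟩
  change g' • ((_ : G) : G ⧸ H) = g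
  rw [MulAction.Quotient.smul_coe, smul_eq_mul, QuotientGroup.eq]
  convert hh₀ using 1
  simp only [h₀, commutatorElement_def]
  group

variable [TopologicalSpace G] [IsTopologicalGroup G]

theorem propertyM_of_forall_commutator_mem [SigmaCompactSpace G] {L K : Set G}
    (hL : L ∈ 𝓝 (1 : G)) (hLc : IsCompact L) (hK : IsCompact K)
    (hLK : ∀ u ∈ L, ∀ g : G, ⁅u, g⁆ ∈ K) : PropertyM G := by
  intro H _ ⟨μ, hμ, hμinv⟩
  by_contra hnc
  let _ : MeasurableSpace (G ⧸ H) := borel (G ⧸ H)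
  have : BorelSpace (G ⧸ H) := ⟨rfl⟩
  have : SMulInvariantMeasure G (G ⧸ H) μ :=
    ⟨fun c s hs => by rw [← Measure.map_apply (measurable_const_smul c) hs, hμinv]⟩
  set B : Set (G ⧸ H) := (↑) '' interior L
  have hB : IsOpen B := QuotientGroup.isOpenMap_coe _ isOpen_interior
  have hBpos : μ B ≠ 0 := by
    obtain ⟨Q, hQ, hQU⟩ := isSigmaCompact_range (QuotientGroup.continuous_mk (N := H))
    obtain ⟨n, hn⟩ : ∃ n, μ (Q n) ≠ 0 := by
      by_contra! h0
      simpa [hQU, QuotientGroup.mk_surjective.range_eq] using measure_iUnion_null h0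
    exact (measure_isOpen_pos_of_smulInvariant_of_compact_ne_zero G (hQ n) hn hB
      ⟨_, 1, mem_interior_iff_mem_nhds.2 hL, rfl⟩).ne'
  refine hBpos (measure_eq_zero_of_forall_exists_disjoint_smul G μ hB.measurableSet fun t => ?_)
  set A := ⋃ g' ∈ t, g' • (((↑) : G → G ⧸ H) '' (L * L⁻¹ * K))
  have hA : IsCompact A := t.isCompact_biUnion fun g' _ =>
    (((hLc.mul hLc.inv).mul hK).image QuotientGroup.continuous_mk).smul g'
  obtain ⟨q, hq⟩ := (ne_univ_iff_exists_notMem A).1 fun hAU =>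
    hnc (show IsCompact univ from hAU ▸ hA)
  obtain ⟨g, rfl⟩ := QuotientGroup.mk_surjective q
  refine ⟨g, disjoint_iUnion₂_right.2 fun g' hg' =>
    not_not.1 fun hgg' => hq (mem_iUnion₂.2 ⟨g', hg', ?_⟩)⟩
  obtain ⟨_, ⟨_, ⟨u, hu, rfl⟩, hx⟩, ⟨_, ⟨u', hu', rfl⟩, hx'⟩⟩ := not_disjoint_iff.1 hgg'
  exact mk_mem_smul_image_of_mk_mul_eq hLK (interior_subset hu) (interior_subset hu')
    (hx.trans hx'.symm)

end PropertyM

theorem propertyM_of_compact_by_discrete_by_compact_general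
    {G : Type*} [Group G] [TopologicalSpace G] [IsTopologicalGroup G]
    [LocallyCompactSpace G]
    (hcg : ∃ S : Set G, IsCompact S ∧ Subgroup.closure S = ⊤)
    (N : Subgroup G) [N.Normal] (hNcl : IsClosed (N : Set G))
    (hNcc : IsCompact (Set.univ : Set (G ⧸ N)))
    (V : Subgroup G) (hVcpt : IsCompact (V : Set G))
    (hVopeninN : IsOpen {x : ↥N | (x : G) ∈ V})
    (hVnormalinN : ∀ n ∈ N, ∀ v ∈ V, n * v * n⁻¹ ∈ V) :
    PropertyM G := by
  obtain ⟨S₀, hS₀, hS₀gen⟩ := hcg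
  obtain ⟨S, hS, hSinv, hS1, hS₀S⟩ := hS₀.exists_symmetric_superset
  have hSgen : Subgroup.closure S = ⊤ := top_unique (hS₀gen ▸ Subgroup.closure_mono hS₀S)
  have := sigmaCompactSpace_of_closure_eq_top hS hSinv hSgen
  obtain ⟨C₀, hC₀, hC₀N⟩ := exists_isCompact_forall_mem_mul N hNcc
  obtain ⟨C, hC, hCinv, hC1, hC₀C⟩ := hC₀.exists_symmetric_superset
  have hCN : ∀ g : G, g ∈ C * (N : Set G) := fun g => mul_subset_mul_right hC₀C (hC₀N g)
  have hNC : ∀ g : G, g ∈ (N : Set G) * C := fun g => by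
    simpa [mul_inv_rev, hCinv] using inv_mem_inv.2 (hCN g⁻¹)
  have hE : IsCompact ((N : Set G) ∩ (C * S * C⁻¹)) := ((hC.mul hS).mul hC.inv).inter_left hNcl
  have hcore := eventually_mem_normalCore hC hNC hVnormalinN
    (eventually_mem_of_isOpen_setOf_coe_mem hVopeninN)
  have hcomm := eventually_forall_commutator_mem hE
    (closure_inter_mul_mul_inv_eq N hSgen hSinv hS1 hC1 hNC) hcore
  obtain ⟨L, hL, hLc, K, hK, hLK⟩ := exists_isCompact_forall_commutator_mem hC hVcpt hCN
    (hcomm.mono fun u hu n hn => V.normalCore_le (hu n hn))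
  exact propertyM_of_forall_commutator_mem hL hLc hK hLK

/-- A compactly generated locally compact group with a closed cocompact normal subgroup `N`
admitting a compact subgroup `V ≤ N` that is open in `N` and normal in `N` (i.e. a
compactly generated {compact-by-discrete}-by-compact group) has property (M). -/
theorem propertyM_of_compact_by_discrete_by_compact
    {G : Type*} [Group G] [TopologicalSpace G] [IsTopologicalGroup G]
    [LocallyCompactSpace G] [T2Space G]
    (hcg : ∃ S : Set G, IsCompact S ∧ Subgroup.closure S = ⊤)
    (N : Subgroup G) [N.Normal] (hNcl : IsClosed (N : Set G))
    (hNcc : IsCompact (Set.univ : Set (G ⧸ N)))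
    (V : Subgroup G) (hVN : V ≤ N) (hVcpt : IsCompact (V : Set G))
    (hVopeninN : IsOpen {x : ↥N | (x : G) ∈ V})
    (hVnormalinN : ∀ n ∈ N, ∀ v ∈ V, n * v * n⁻¹ ∈ V) :
    PropertyM G :=
  propertyM_of_compact_by_discrete_by_compact_general hcg N hNcl hNcc V hVcpt hVopeninN hVnormalinN
end

section
/- Let O be a locally compact group which is the union of an ascending chain O₁ ≤ O₂ ≤ O₃ ≤ ⋯ of compact open subgroups. If sup_n [O_{n+1} : O_n] < ∞, then O has property (M): every closed subgroup of finite covolume in O is cocompact. -/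
open MeasureTheory MulAction Pointwise
open scoped ENNReal

namespace MulAction

variable {G X : Type*} [Group G] [MulAction G X]

theorem orbit_subgroup_mono {K L : Subgroup G} (hKL : K ≤ L) (x : X) :
    orbit K x ⊆ orbit L x := by
  rintro _ ⟨k, rfl⟩
  exact ⟨⟨k, hKL k.2⟩, rfl⟩

theorem orbit_subgroup_eq_image (K : Subgroup G) (x : X) :
    orbit K x = (· • x) '' (K : Set G) := by
  ext z
  simp [mem_orbit_iff]

variable [MeasurableSpace X] (μ : Measure X) [SMulInvariantMeasure G X μ]

theorem measure_orbit_le_relIndex_mul {K L : Subgroup G} (hKL : K.relIndex L ≠ 0) (y : X) :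
    μ (orbit L y) ≤ K.relIndex L * μ (orbit K y) := by
  have : Finite (L ⧸ K.subgroupOf L) := (Nat.card_ne_zero.mp hKL).2
  have : Fintype (L ⧸ K.subgroupOf L) := Fintype.ofFinite _
  have hcover : orbit L y ⊆ ⋃ q : L ⧸ K.subgroupOf L, (q.out : G) • orbit K y := by
    rintro _ ⟨l, rfl⟩
    obtain ⟨k, hk⟩ := QuotientGroup.mk_out_eq_mul (K.subgroupOf L) l
    have hkK : ((k : L) : G)⁻¹ ∈ K := K.inv_mem (Subgroup.mem_subgroupOf.mp k.2)
    refine Set.mem_iUnion.mpr ⟨l, Set.mem_smul_set.mpr ⟨_, ⟨⟨_, hkK⟩, rfl⟩, ?_⟩⟩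
    simp only [hk, Subgroup.mk_smul, smul_smul, Subgroup.coe_mul, mul_inv_cancel_right]
    rfl
  calc μ (orbit L y) ≤ ∑ q : L ⧸ K.subgroupOf L, μ ((q.out : G) • orbit K y) :=
        (measure_mono hcover).trans (measure_iUnion_fintype_le μ _)
    _ = K.relIndex L * μ (orbit K y) := by
        simp only [measure_smul, Finset.sum_const, Finset.card_univ, nsmul_eq_mul]
        rw [Subgroup.relIndex, Subgroup.index, Nat.card_eq_fintype_card]

variable {O : ℕ → Subgroup G} {C : ℕ}

theorem measure_orbit_le_mul_measure_compl (hmono : Monotone O)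
    (hC : ∀ n, (O n).relIndex (O (n + 1)) ≤ C) (hfin : ∀ n, (O n).relIndex (O (n + 1)) ≠ 0)
    {x y : X} (hcover : ∃ N, y ∈ orbit (O N) x) {n : ℕ}
    (hy : y ∉ orbit (O n) x) :
    μ (orbit (O n) x) ≤ C * μ (orbit (O n) x)ᶜ := by
  obtain ⟨N, hN⟩ := hcover
  obtain ⟨k, hyk, hyk'⟩ := Nat.exists_not_and_succ_of_not_zero_of_exists
    (p := fun k => y ∈ orbit (O (n + k)) x) hy
    ⟨N, orbit_subgroup_mono (hmono (by omega)) x hN⟩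
  have hdisj : orbit (O (n + k)) y ⊆ (orbit (O n) x)ᶜ :=
    ((orbit.eq_or_disjoint y x).resolve_left fun h => hyk (h ▸ mem_orbit_self y))
      |>.subset_compl_right.trans
      (Set.compl_subset_compl.mpr (orbit_subgroup_mono (hmono (by omega)) x))
  calc μ (orbit (O n) x) ≤ μ (orbit (O (n + (k + 1))) y) := by
        rw [orbit_eq_iff.mpr hyk']
        exact measure_mono (orbit_subgroup_mono (hmono (by omega)) x)
    _ ≤ (O (n + k)).relIndex (O (n + k + 1)) * μ (orbit (O (n + k)) y) :=
        measure_orbit_le_relIndex_mul μ (hfin _) y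
    _ ≤ C * μ (orbit (O n) x)ᶜ := mul_le_mul' (mod_cast hC _) (measure_mono hdisj)

theorem exists_orbit_eq_univ_of_relIndex_le [IsProbabilityMeasure μ] (hmono : Monotone O)
    (hC : ∀ n, (O n).relIndex (O (n + 1)) ≤ C) (hfin : ∀ n, (O n).relIndex (O (n + 1)) ≠ 0)
    (x : X)
    (hmeas : ∀ n, MeasurableSet (orbit (O n) x)) (hcover : ∀ y, ∃ n, y ∈ orbit (O n) x) :
    ∃ n, orbit (O n) x = Set.univ := by
  by_contra! hne
  have hlarge : ∀ n, 1 ≤ (C + 1 : ℝ≥0∞) * μ (orbit (O n) x)ᶜ := fun n => by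
    obtain ⟨y, hy⟩ := (Set.ne_univ_iff_exists_notMem _).mp (hne n)
    calc 1 = μ (orbit (O n) x) + μ (orbit (O n) x)ᶜ := by
          rw [measure_add_measure_compl (hmeas n), measure_univ]
      _ ≤ C * μ (orbit (O n) x)ᶜ + μ (orbit (O n) x)ᶜ := by
          gcongr
          exact measure_orbit_le_mul_measure_compl μ hmono hC hfin (hcover y) hy
      _ = (C + 1) * μ (orbit (O n) x)ᶜ := by ring
  have hsmall : Filter.Tendsto (fun n => (C + 1 : ℝ≥0∞) * μ (orbit (O n) x)ᶜ)
      Filter.atTop (nhds 0) := by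
    have hexhaust : (⋃ n, orbit (O n) x) = Set.univ :=
      Set.eq_univ_of_forall fun y => Set.mem_iUnion.mpr (hcover y)
    have hto_one := tendsto_measure_iUnion_atTop (μ := μ)
      (fun a b hab => orbit_subgroup_mono (hmono hab) x)
    rw [hexhaust, measure_univ] at hto_one
    have hcompl := ENNReal.Tendsto.sub tendsto_const_nhds hto_one (Or.inl ENNReal.one_ne_top)
    simp only [Function.comp_apply, tsub_self, ← prob_compl_eq_one_sub (hmeas _)] at hcompl
    simpa using ENNReal.Tendsto.const_mul hcompl (Or.inr (by simp))
  obtain ⟨n, hn⟩ := (hsmall.eventually_lt_const one_pos).exists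
  exact absurd hn (not_lt.mpr (hlarge n))

end MulAction

theorem propertyM_of_bounded_index_chain_general
    {G : Type*} [Group G] [TopologicalSpace G] [IsTopologicalGroup G]
    (O : ℕ → Subgroup G) (hmono : Monotone O)
    (hcpt : ∀ n, IsCompact ((O n : Subgroup G) : Set G))
    (hopen : ∀ n, IsOpen ((O n : Subgroup G) : Set G))
    (hunion : ∀ g : G, ∃ n, g ∈ O n)
    (hbdd : ∃ C : ℕ, ∀ n, (O n).relIndex (O (n + 1)) ≤ C ∧ (O n).relIndex (O (n + 1)) ≠ 0) :
    PropertyM G := by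
  obtain ⟨C, hC⟩ := hbdd
  intro H _ hvol
  let _ : MeasurableSpace (G ⧸ H) := borel (G ⧸ H)
  have _ : BorelSpace (G ⧸ H) := ⟨rfl⟩
  obtain ⟨μ, _, hinv⟩ := hvol
  have _ : SMulInvariantMeasure G (G ⧸ H) μ :=
    ((smulInvariantMeasure_tfae G μ).out 0 5).mpr hinv
  have hU : ∀ n, (· • (QuotientGroup.mk 1 : G ⧸ H)) '' (O n : Set G) =
      QuotientGroup.mk '' (O n : Set G) := by
    simp
  obtain ⟨n, hn⟩ := exists_orbit_eq_univ_of_relIndex_le μ hmono (fun n => (hC n).1)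
    (fun n => (hC n).2) (QuotientGroup.mk 1 : G ⧸ H)
    (fun n => by
      rw [orbit_subgroup_eq_image, hU]
      exact (QuotientGroup.isOpenMap_coe _ (hopen n)).measurableSet)
    (fun y => by
      obtain ⟨g, rfl⟩ := QuotientGroup.mk_surjective y
      obtain ⟨n, hn⟩ := hunion g
      exact ⟨n, by rw [orbit_subgroup_eq_image, hU]; exact Set.mem_image_of_mem _ hn⟩)
  rw [orbit_subgroup_eq_image, hU] at hn
  unfold IsCocompactSubgroup
  exact hn ▸ (hcpt n).image QuotientGroup.continuous_mk

/-- Let `O` be a locally compact group which is the union of an ascending chain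
`O₁ ≤ O₂ ≤ ⋯` of compact open subgroups with uniformly bounded indices
`[O_{n+1} : O_n]`.  Then `O` has property (M). -/
theorem propertyM_of_bounded_index_chain
    {G : Type*} [Group G] [TopologicalSpace G] [IsTopologicalGroup G] [T2Space G]
    (O : ℕ → Subgroup G) (hmono : Monotone O)
    (hcpt : ∀ n, IsCompact ((O n : Subgroup G) : Set G))
    (hopen : ∀ n, IsOpen ((O n : Subgroup G) : Set G))
    (hunion : ∀ g : G, ∃ n, g ∈ O n)
    (hbdd : ∃ C : ℕ, ∀ n, (O n).relIndex (O (n + 1)) ≤ C ∧ (O n).relIndex (O (n + 1)) ≠ 0) :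
    PropertyM G :=
  propertyM_of_bounded_index_chain_general O hmono hcpt hopen hunion hbdd
end

section
/- Let G be a unimodular totally disconnected locally compact group, K a compact open subgroup of G, and H a closed unimodular subgroup of G such that G/H carries a G-invariant Radon measure μ. Normalize the left Haar measures vol_G on G and vol_H on H so that vol_G(K) = 1 and vol_H(K ∩ H) = 1, and normalize μ so that the orbit K·x₀ of the base point x₀ = H ∈ G/H has μ-measure 1. Then for every set Ω ⊆ G of representatives of the double cosets K\G/H one has μ(G/H) = Σ_{t ∈ Ω} 1 / vol_H(t⁻¹Kt ∩ H), where for each t the group t⁻¹Kt ∩ H is a compact open subgroup of H (so each summand is finite and the sum is a possibly infinite sum of positive reals). -/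
/-!
Let `a(L) = vol_H (L ∩ H) · μ (L · x₀)` for a compact open subgroup `L ≤ G`. For `K₂ ≤ K₁`
compact open, `K₁` is the union of `[K₁ : K₂]` left cosets of `K₂`, `K₁ ∩ H` the union of
`[K₁ ∩ H : K₂ ∩ H]` cosets of `K₂ ∩ H`, and counting the incidences between the cosets
`kK₂ ⊆ K₁` and the points of `K₁ · x₀` gives `[K₁ : K₂] μ (K₂ x₀) = [K₁ ∩ H : K₂ ∩ H] μ (K₁ x₀)`.
Hence `a(L) / vol_G (L)` does not depend on `L` (compare any two through their intersection).
Since `G` is unimodular, `t⁻¹Kt` has the same `vol_G` as `K`, so `a(t⁻¹Kt) = a(K) = 1`, and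
`a(t⁻¹Kt) = vol_H (t⁻¹Kt ∩ H) · μ (K t x₀)` after translating by `t`. Finally `G/H` is the
disjoint union of the open orbits `K t x₀`, `t ∈ Ω`, each of positive measure.
-/

open MeasureTheory Pointwise ENNReal

namespace Subgroup

variable {G : Type*} [Group G]

theorem ncard_image_mk (K L : Subgroup G) :
    ((↑) '' (L : Set G) : Set (G ⧸ K)).ncard = K.relIndex L := by
  have hsmul (y : L) : y • ((1 : G) : G ⧸ K) = ((y : G) : G ⧸ K) := by
    change (y : G) • ((1 : G) : G ⧸ K) = _
    simp
  have horbit : MulAction.orbit L ((1 : G) : G ⧸ K) = (↑) '' (L : Set G) := by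
    ext x
    simp [MulAction.mem_orbit_iff, hsmul]
  have hstab : MulAction.stabilizer L ((1 : G) : G ⧸ K) = K.subgroupOf L := by
    ext y
    rw [MulAction.mem_stabilizer_iff, hsmul, QuotientGroup.eq, mem_subgroupOf]
    simp
  rw [relIndex, ← hstab, MulAction.index_stabilizer, horbit]

theorem isFiniteRelIndex_of_isOpen_of_isCompact [TopologicalSpace G] [IsTopologicalGroup G]
    {K L : Subgroup G} (hK : IsOpen (K : Set G)) (hL : IsCompact (L : Set G)) :
    K.IsFiniteRelIndex L := by
  have : CompactSpace L := isCompact_iff_compactSpace.mp hL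
  have := (K.subgroupOf L).quotient_finite_of_isOpen (hK.preimage continuous_subtype_val)
  exact isFiniteRelIndex_iff_finiteIndex.2 finiteIndex_of_finite_quotient

variable [MeasurableSpace G] [MeasurableMul G]

instance measurableMul (L : Subgroup G) : MeasurableMul L where
  measurable_const_mul c := ((measurable_const_mul (c : G)).comp measurable_subtype_coe).subtype_mk
  measurable_mul_const c := ((measurable_mul_const (c : G)).comp measurable_subtype_coe).subtype_mk

theorem relIndex_mul_measure {K L : Subgroup G} (hKL : K ≤ L) [K.IsFiniteRelIndex L]
    (hK : MeasurableSet (K : Set G)) (hL : MeasurableSet (L : Set G))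
    (ν : Measure G) [ν.IsMulLeftInvariant] : K.relIndex L * ν K = ν L := by
  have hemb : MeasurableEmbedding L.subtype := MeasurableEmbedding.subtype_coe hL
  have := Measure.IsMulLeftInvariant.comap ν hemb
  have := (K.subgroupOf L).index_mul_measure (measurable_subtype_coe hK) (ν.comap L.subtype)
  rwa [hemb.comap_apply, hemb.comap_apply, Set.image_univ, coe_subgroupOf, coe_subtype,
    Subtype.range_coe, Set.image_preimage_eq_of_subset (by simpa using hKL)] at this

end Subgroup

namespace MeasureTheory

/-- A measure-theoretic version of `Finset.card_mul_eq_card_mul`. -/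
theorem ncard_mul_eq_mul_measure_of_bipartite {ι α : Type*} [MeasurableSpace α]
    (μ : Measure α) (r : ι → α → Prop) {s : Set ι} (hs : s.Finite) {B : Set α}
    (hB : MeasurableSet B) {m : ℝ≥0∞} {n : ℕ}
    (hmeas : ∀ i ∈ s, MeasurableSet {y | r i y}) (hm : ∀ i ∈ s, μ {y | r i y} = m)
    (hsub : ∀ i ∈ s, ∀ y, r i y → y ∈ B) (hn : ∀ y ∈ B, {i ∈ s | r i y}.ncard = n) :
    s.ncard * m = n * μ B := by
  classical
  have hfiber (z : α) : ∑ i ∈ hs.toFinset, {y | r i y}.indicator 1 z =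
      B.indicator (fun _ => (n : ℝ≥0∞)) z := by
    simp only [Set.indicator_apply, Set.mem_ofPred_eq, Pi.one_apply]
    rw [Finset.sum_boole]
    split_ifs with hz
    · rw [← hn z hz, ← Set.ncard_coe_finset, Finset.coe_filter]
      simp
    · rw [Finset.filter_false_of_mem fun i hi hr => hz (hsub i (by simpa using hi) z hr)]
      simp
  calc (s.ncard : ℝ≥0∞) * m = ∑ i ∈ hs.toFinset, μ {y | r i y} := by
        rw [Finset.sum_congr rfl fun i hi => hm i (by simpa using hi), Finset.sum_const,
          nsmul_eq_mul, Set.ncard_eq_toFinset_card s hs]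
    _ = ∫⁻ y, ∑ i ∈ hs.toFinset, {y | r i y}.indicator 1 y ∂μ := by
        rw [lintegral_finsetSum _ fun i hi =>
          measurable_one.indicator (hmeas i (by simpa using hi))]
        exact Finset.sum_congr rfl fun i hi =>
          (lintegral_indicator_one (hmeas i (by simpa using hi))).symm
    _ = n * μ B := by
        rw [lintegral_congr hfiber, lintegral_indicator_const hB]

theorem measure_iUnion_of_ne_zero {ι α : Type*} [MeasurableSpace α] (μ : Measure α)
    {s : ι → Set α} (hd : Pairwise (Function.onFun Disjoint s)) (hm : ∀ i, MeasurableSet (s i))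
    (h0 : ∀ i, μ (s i) ≠ 0) : μ (⋃ i, s i) = ∑' i, μ (s i) := by
  refine le_antisymm ?_ (tsum_meas_le_meas_iUnion_of_disjoint μ hm hd)
  by_cases htop : ∑' i, μ (s i) = ∞
  · exact htop ▸ le_top
  -- a finite sum has only countably many nonzero terms
  have : Countable ι := Set.countable_univ_iff.1 <| by
    simpa [Function.support, h0] using Summable.countable_support_ennreal htop
  exact measure_iUnion_le s

end MeasureTheory

namespace QuotientGroup

variable {G : Type*} [Group G] {H : Subgroup G}

theorem image_mk_smul (a : G) (A : Set G) :
    ((↑) '' (a • A) : Set (G ⧸ H)) = a • ((↑) '' A : Set (G ⧸ H)) :=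
  Set.image_smul_comm _ _ _ fun _ => rfl

theorem measure_image_mk_smul [MeasurableSpace (G ⧸ H)] (μ : Measure (G ⧸ H))
    [SMulInvariantMeasure G (G ⧸ H) μ] (a : G) (A : Set G) :
    μ ((↑) '' (a • A)) = μ ((↑) '' A) := by
  rw [image_mk_smul, measure_smul]

theorem setOf_exists_mk_eq_image_smul (K : Subgroup G) (a : G) :
    {y : G ⧸ H | ∃ x : G, (a : G ⧸ K) = x ∧ (x : G ⧸ H) = y} = (↑) '' (a • (K : Set G)) := by
  ext y
  simp only [Set.mem_ofPred_eq, QuotientGroup.eq, Set.mem_image,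
    Set.mem_smul_set_iff_inv_smul_mem, smul_eq_mul, SetLike.mem_coe]

theorem sep_image_mk_exists_mk_eq_smul {K₁ K₂ : Subgroup G} (hK : K₂ ≤ K₁) {g : G} (hg : g ∈ K₁) :
    {c ∈ ((↑) '' (K₁ : Set G) : Set (G ⧸ K₂)) | ∃ x : G, c = x ∧ (x : G ⧸ H) = g} =
      g • (↑) '' ((K₁ ⊓ H : Subgroup G) : Set G) := by
  rw [← image_mk_smul]
  ext c
  simp only [Set.mem_ofPred_eq, Set.mem_image, Set.mem_smul_set, smul_eq_mul, SetLike.mem_coe,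
    Subgroup.coe_inf, Set.mem_inter_iff]
  constructor
  · rintro ⟨⟨k, hk, rfl⟩, x, hkx, hxg⟩
    rw [QuotientGroup.eq] at hxg
    have hx : x ∈ K₁ := by simpa using mul_mem hk (hK (QuotientGroup.eq.1 hkx))
    exact ⟨x, ⟨g⁻¹ * x, ⟨mul_mem (inv_mem hg) hx, by simpa using inv_mem hxg⟩, by group⟩, hkx.symm⟩
  · rintro ⟨_, ⟨h, ⟨hK₁h, hHh⟩, rfl⟩, rfl⟩
    refine ⟨⟨g * h, mul_mem hg hK₁h, rfl⟩, g * h, rfl, ?_⟩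
    rw [QuotientGroup.eq]
    simpa using hHh

variable [TopologicalSpace G] [IsTopologicalGroup G]
  [MeasurableSpace (G ⧸ H)] [BorelSpace (G ⧸ H)] (μ : Measure (G ⧸ H))
  [SMulInvariantMeasure G (G ⧸ H) μ]

theorem relIndex_mul_measure_image_mk {K₁ K₂ : Subgroup G} (hK : K₂ ≤ K₁)
    [K₂.IsFiniteRelIndex K₁] (hK₂ : IsOpen (K₂ : Set G)) :
    K₂.relIndex K₁ * μ ((↑) '' (K₂ : Set G)) =
      K₂.relIndex (K₁ ⊓ H) * μ ((↑) '' (K₁ : Set G)) := by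
  -- double counting of the pairs (coset `c ∈ K₁ ⧸ K₂`, point `y ∈ K₁ x₀`) with `y ∈ c x₀`
  let r : G ⧸ K₂ → G ⧸ H → Prop := fun c y => ∃ x : G, c = x ∧ (x : G ⧸ H) = y
  have hK₁ : IsOpen (K₁ : Set G) := Subgroup.isOpen_mono hK hK₂
  rw [← Subgroup.ncard_image_mk, ← Subgroup.ncard_image_mk]
  refine ncard_mul_eq_mul_measure_of_bipartite μ r ?finite (isOpenMap_coe _ hK₁).measurableSet
    ?measurable ?measure ?subset ?fiber
  case finite =>
    refine Set.finite_of_ncard_ne_zero ?_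
    rw [Subgroup.ncard_image_mk]
    exact Subgroup.relIndex_ne_zero
  case measurable =>
    rintro _ ⟨a, -, rfl⟩
    rw [setOf_exists_mk_eq_image_smul]
    exact (isOpenMap_coe _ (hK₂.smul a)).measurableSet
  case measure =>
    rintro _ ⟨a, -, rfl⟩
    rw [setOf_exists_mk_eq_image_smul, measure_image_mk_smul]
  case subset =>
    rintro _ ⟨a, ha, rfl⟩ y hy
    rw [← Set.mem_ofPred_eq (p := r a), setOf_exists_mk_eq_image_smul] at hy
    obtain ⟨_, ⟨k, hk, rfl⟩, rfl⟩ := hy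
    exact ⟨a * k, mul_mem ha (hK hk), rfl⟩
  case fiber =>
    rintro _ ⟨g, hg, rfl⟩
    rw [sep_image_mk_exists_mk_eq_smul hK hg, Set.ncard_smul_set]

end QuotientGroup

theorem image_conj_eq_preimage {G : Type*} [Group G] (t : G) (A : Set G) :
    (fun x => t⁻¹ * x * t) '' A = (fun x => t * x * t⁻¹) ⁻¹' A :=
  congrFun (Set.image_eq_preimage_of_inverse (fun x => by group) (fun x => by group)) A

theorem measure_image_conj {G : Type*} [Group G] [MeasurableSpace G] [MeasurableMul G]
    (ν : Measure G) [ν.IsMulLeftInvariant] [ν.IsMulRightInvariant] (t : G) (A : Set G) :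
    ν ((fun x => t⁻¹ * x * t) '' A) = ν A := by
  rw [image_conj_eq_preimage,
    show (fun x => t * x * t⁻¹) ⁻¹' A = (· * t⁻¹) ⁻¹' ((t * ·) ⁻¹' A) by ext; simp [mul_assoc]]
  exact (measure_preimage_mul_right ν t⁻¹ ((t * ·) ⁻¹' A)).trans (measure_preimage_mul ν t A)

section Covolume

variable {G : Type*} [Group G] [TopologicalSpace G] [IsTopologicalGroup G]
  [MeasurableSpace G] [BorelSpace G] {H : Subgroup G}
  (volG : Measure G) [volG.IsHaarMeasure] (volH : Measure H) [volH.IsMulLeftInvariant]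
  [MeasurableSpace (G ⧸ H)] [BorelSpace (G ⧸ H)] (μ : Measure (G ⧸ H))
  [SMulInvariantMeasure G (G ⧸ H) μ]

theorem measure_mul_measure_image_mk_of_le {K₁ K₂ : Subgroup G} (hK : K₂ ≤ K₁)
    (hK₁ : IsCompact (K₁ : Set G)) (hK₂ : IsOpen (K₂ : Set G)) :
    volG K₁ * (volH {h : H | (h : G) ∈ K₂} * μ ((↑) '' (K₂ : Set G))) =
      volG K₂ * (volH {h : H | (h : G) ∈ K₁} * μ ((↑) '' (K₁ : Set G))) := by
  have hK₁o : IsOpen (K₁ : Set G) := Subgroup.isOpen_mono hK hK₂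
  have := Subgroup.isFiniteRelIndex_of_isOpen_of_isCompact hK₂ hK₁
  have hrel : (K₂.subgroupOf H).relIndex (K₁.subgroupOf H) = K₂.relIndex (K₁ ⊓ H) := by
    rw [← Subgroup.inf_subgroupOf_right K₁ H, Subgroup.relIndex_subgroupOf inf_le_right]
  have : (K₂.subgroupOf H).IsFiniteRelIndex (K₁.subgroupOf H) := by
    rw [Subgroup.isFiniteRelIndex_iff_relIndex_ne_zero, hrel]
    exact mt (Subgroup.relIndex_eq_zero_of_le_left inf_le_left)
      (Subgroup.relIndex_inter_ne_zero Subgroup.relIndex_ne_zero H)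
  have hG := Subgroup.relIndex_mul_measure hK hK₂.measurableSet hK₁o.measurableSet volG
  have hH := Subgroup.relIndex_mul_measure (K := K₂.subgroupOf H) (L := K₁.subgroupOf H)
    (Subgroup.subgroupOf_mono H hK) (measurable_subtype_coe hK₂.measurableSet)
    (measurable_subtype_coe hK₁o.measurableSet) volH
  have hμ := QuotientGroup.relIndex_mul_measure_image_mk μ hK hK₂
  rw [hrel] at hH
  change volG K₁ * (volH (K₂.subgroupOf H) * _) = volG K₂ * (volH (K₁.subgroupOf H) * _)
  rw [← hG, ← hH]
  calc _ = volG K₂ * volH (K₂.subgroupOf H) * (K₂.relIndex K₁ * μ ((↑) '' (K₂ : Set G))) := by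
        ring
    _ = _ := by rw [hμ]; ring

theorem measure_mul_measure_image_mk_comm {K₁ K₂ : Subgroup G}
    (hK₁c : IsCompact (K₁ : Set G)) (hK₁o : IsOpen (K₁ : Set G))
    (hK₂c : IsCompact (K₂ : Set G)) (hK₂o : IsOpen (K₂ : Set G)) :
    volG K₁ * (volH {h : H | (h : G) ∈ K₂} * μ ((↑) '' (K₂ : Set G))) =
      volG K₂ * (volH {h : H | (h : G) ∈ K₁} * μ ((↑) '' (K₁ : Set G))) := by
  set a : Subgroup G → ℝ≥0∞ := fun L => volH {h : H | (h : G) ∈ L} * μ ((↑) '' (L : Set G))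
  have hK₃o : IsOpen ((K₁ ⊓ K₂ : Subgroup G) : Set G) := hK₁o.inter hK₂o
  have h₁ := measure_mul_measure_image_mk_of_le volG volH μ inf_le_left hK₁c hK₃o
  have h₂ := measure_mul_measure_image_mk_of_le volG volH μ inf_le_right hK₂c hK₃o
  have h0 : volG (K₁ ⊓ K₂ : Subgroup G) ≠ 0 := (hK₃o.measure_pos volG ⟨1, one_mem _⟩).ne'
  have htop : volG (K₁ ⊓ K₂ : Subgroup G) ≠ ∞ :=
    (hK₁c.inter_right (K₂.isClosed_of_isOpen hK₂o)).measure_lt_top.ne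
  refine (ENNReal.mul_right_inj h0 htop).1 ?_
  calc volG (K₁ ⊓ K₂ : Subgroup G) * (volG K₁ * a K₂)
      = volG K₁ * (volG K₂ * a (K₁ ⊓ K₂)) := by rw [mul_left_comm, ← h₂]
    _ = volG K₂ * (volG (K₁ ⊓ K₂ : Subgroup G) * a K₁) := by rw [mul_left_comm, h₁]
    _ = volG (K₁ ⊓ K₂ : Subgroup G) * (volG K₂ * a K₁) := mul_left_comm _ _ _

theorem measure_mul_measure_orbit_eq_one [volG.IsMulRightInvariant] {K : Subgroup G}
    (hKc : IsCompact (K : Set G)) (hKo : IsOpen (K : Set G))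
    (hvolHK : volH {h : H | (h : G) ∈ K} = 1) (hμK : μ ((↑) '' (K : Set G)) = 1) (t : G) :
    volH {h : H | (h : G) ∈ (fun x => t⁻¹ * x * t) '' (K : Set G)} *
      μ ((↑) '' ((· * t) '' (K : Set G))) = 1 := by
  set K' : Subgroup G := K.map (MulAut.conj t⁻¹).toMonoidHom
  have hK' : (K' : Set G) = (fun x => t⁻¹ * x * t) '' K := by
    rw [Subgroup.coe_map]
    exact Set.image_congr fun x _ => by simp
  have hK'c : IsCompact (K' : Set G) := hK' ▸ hKc.image (by fun_prop)
  have hK'o : IsOpen (K' : Set G) := by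
    rw [hK', image_conj_eq_preimage]
    exact hKo.preimage (by fun_prop)
  have hvol : volG K' = volG K := by rw [hK', measure_image_conj]
  have horbit : μ ((↑) '' ((· * t) '' (K : Set G))) = μ ((↑) '' (K' : Set G)) := by
    rw [← QuotientGroup.measure_image_mk_smul μ t (K' : Set G), hK', ← Set.image_smul,
      Set.image_image, Set.image_image, Set.image_image]
    exact congrArg μ (Set.image_congr fun x _ => congrArg _ (by rw [smul_eq_mul]; group))
  have key := measure_mul_measure_image_mk_comm volG volH μ hKc hKo hK'c hK'o
  rw [hvol, hvolHK, hμK, one_mul] at key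
  rw [horbit, ← hK']
  exact (ENNReal.mul_right_inj (hKo.measure_pos volG ⟨1, one_mem K⟩).ne'
    hKc.measure_lt_top.ne).1 key

end Covolume

section DoubleCosets

variable {G : Type*} [Group G] {K H : Subgroup G} {Ω : Set G}

theorem iUnion_image_mk_mul_eq_univ
    (hcover : ∀ g : G, ∃ t ∈ Ω, ∃ k ∈ K, ∃ h ∈ H, g = k * t * h) :
    ⋃ t : Ω, ((↑) '' ((· * (t : G)) '' (K : Set G)) : Set (G ⧸ H)) = Set.univ := by
  refine Set.eq_univ_of_forall fun y => ?_
  obtain ⟨g, rfl⟩ := QuotientGroup.mk_surjective y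
  obtain ⟨t, htΩ, k, hk, h, hh, rfl⟩ := hcover g
  exact Set.mem_iUnion.2 ⟨⟨t, htΩ⟩, k * t, ⟨k, hk, rfl⟩, (QuotientGroup.mk_mul_of_mem _ hh).symm⟩

theorem pairwise_disjoint_image_mk_mul
    (hunique : ∀ t₁ ∈ Ω, ∀ t₂ ∈ Ω, (∃ k ∈ K, ∃ h ∈ H, t₂ = k * t₁ * h) → t₁ = t₂) :
    Pairwise (Function.onFun Disjoint
      fun t : Ω => ((↑) '' ((· * (t : G)) '' (K : Set G)) : Set (G ⧸ H))) := by
  intro t₁ t₂ hne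
  refine Set.disjoint_left.2 ?_
  rintro _ ⟨_, ⟨k₁, hk₁, rfl⟩, hmk₁⟩ ⟨_, ⟨k₂, hk₂, rfl⟩, hmk₂⟩
  have hH : (k₁ * t₁)⁻¹ * (k₂ * t₂) ∈ H := by rw [← QuotientGroup.eq, hmk₁, hmk₂]
  exact hne <| Subtype.ext <| hunique _ t₁.2 _ t₂.2
    ⟨k₂⁻¹ * k₁, mul_mem (inv_mem hk₂) hk₁, _, hH, by group⟩

end DoubleCosets

theorem serre_covolume_formula_general
    {G : Type*} [Group G] [TopologicalSpace G] [IsTopologicalGroup G]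
    [MeasurableSpace G] [BorelSpace G]
    (volG : Measure G) [volG.IsHaarMeasure] [volG.IsMulRightInvariant]
    (K : Subgroup G) (hKc : IsCompact (K : Set G)) (hKo : IsOpen (K : Set G))
    (H : Subgroup G)
    (volH : Measure ↥H) [volH.IsHaarMeasure]
    (hvolHK : volH {h : ↥H | (h : G) ∈ K} = 1)
    [MeasurableSpace (G ⧸ H)] [BorelSpace (G ⧸ H)]
    (μ : Measure (G ⧸ H))
    (hinv : ∀ g : G, Measure.map (fun x : G ⧸ H => g • x) μ = μ)
    (hμK : μ ((fun g : G => (g : G ⧸ H)) '' (K : Set G)) = 1)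
    (Ω : Set G)
    (hcover : ∀ g : G, ∃ t ∈ Ω, ∃ k ∈ K, ∃ h ∈ H, g = k * t * h)
    (hunique : ∀ t₁ ∈ Ω, ∀ t₂ ∈ Ω, (∃ k ∈ K, ∃ h ∈ H, t₂ = k * t₁ * h) → t₁ = t₂) :
    μ Set.univ =
      ∑' t : Ω, (volH {h : ↥H | (h : G) ∈ (fun x => (t : G)⁻¹ * x * (t : G)) '' (K : Set G)})⁻¹ := by
  have : SMulInvariantMeasure G (G ⧸ H) μ :=
    ⟨fun c s hs => by rw [← Measure.map_apply (measurable_const_smul c) hs, hinv]⟩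
  have horbit (t : Ω) := measure_mul_measure_orbit_eq_one volG volH μ hKc hKo hvolHK hμK t
  rw [← iUnion_image_mk_mul_eq_univ hcover, measure_iUnion_of_ne_zero μ
    (pairwise_disjoint_image_mk_mul hunique)
    (fun t => (QuotientGroup.isOpenMap_coe _ (isOpenMap_mul_right (t : G) _ hKo)).measurableSet)
    (fun t => right_ne_zero_of_mul_eq_one (horbit t))]
  exact tsum_congr fun t => ENNReal.eq_inv_of_mul_eq_one_left ((mul_comm _ _).trans (horbit t))

/-- **Serre's covolume formula.**  Let `G` be a unimodular totally disconnected locally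
compact group, `K` a compact open subgroup, `H` a closed unimodular subgroup, and `μ` a
`G`-invariant Radon measure on `G/H`.  Normalize `vol_H` so that `vol_H (K ∩ H) = 1` and
`μ` so that `μ (K · x₀) = 1`, where `x₀` is the base point of `G/H` (and fix a Haar measure
`vol_G` with `vol_G K = 1`).  Then for any set `Ω ⊆ G` of representatives of the double
cosets `K\G/H`, the total mass of `μ` is `∑_{t ∈ Ω} 1 / vol_H (t⁻¹Kt ∩ H)`. -/
theorem serre_covolume_formula
    {G : Type*} [Group G] [TopologicalSpace G] [IsTopologicalGroup G]
    [LocallyCompactSpace G] [T2Space G] [TotallyDisconnectedSpace G]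
    [MeasurableSpace G] [BorelSpace G]
    (volG : Measure G) [volG.IsHaarMeasure] [volG.IsMulRightInvariant]
    (K : Subgroup G) (hKc : IsCompact (K : Set G)) (hKo : IsOpen (K : Set G))
    (hvolGK : volG (K : Set G) = 1)
    (H : Subgroup G) (hHcl : IsClosed (H : Set G))
    (volH : Measure ↥H) [volH.IsHaarMeasure] [volH.IsMulRightInvariant]
    (hvolHK : volH {h : ↥H | (h : G) ∈ K} = 1)
    [MeasurableSpace (G ⧸ H)] [BorelSpace (G ⧸ H)]
    (μ : Measure (G ⧸ H)) [μ.Regular]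
    (hinv : ∀ g : G, Measure.map (fun x : G ⧸ H => g • x) μ = μ)
    (hμK : μ ((fun g : G => (g : G ⧸ H)) '' (K : Set G)) = 1)
    (Ω : Set G)
    (hcover : ∀ g : G, ∃ t ∈ Ω, ∃ k ∈ K, ∃ h ∈ H, g = k * t * h)
    (hunique : ∀ t₁ ∈ Ω, ∀ t₂ ∈ Ω, (∃ k ∈ K, ∃ h ∈ H, t₂ = k * t₁ * h) → t₁ = t₂) :
    μ Set.univ =
      ∑' t : Ω, (volH {h : ↥H | (h : G) ∈ (fun x => (t : G)⁻¹ * x * (t : G)) '' (K : Set G)})⁻¹ :=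
  serre_covolume_formula_general volG K hKc hKo H volH hvolHK μ hinv hμK Ω hcover hunique
end

section
/- Let G be a compactly generated locally compact group and N a discrete cocompact normal subgroup of G. Then the centralizer C_G(N) is an open normal subgroup of G, and the subgroup N·C_G(N) is open and of finite index in G. If in addition G is totally disconnected, then G has a compact open normal subgroup intersecting N trivially. -/
open Set Pointwise Topology

/-!
`N` is finitely generated: Schreier's argument works with a compact set `K` mapping onto
`G ⧸ N` in place of a transversal, and the resulting generating set `N ∩ K⁻¹ S K` is finite,
being compact and discrete. An element of a discrete normal subgroup has an open centralizer,
since its conjugates stay in `N` and depend continuously on the conjugator; so `C_G(N)`, a finite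
intersection of such centralizers, is open. Open subgroups containing `N` have finite index
because `G ⧸ N` is compact. In the totally disconnected case van Dantzig's theorem gives a
compact open subgroup `U ≤ C_G(N)` meeting `N` only in `1`; its normalizer contains `N`, hence
has finite index, so `U` has finitely many conjugates and its normal core is open.
-/

theorem IsOpenMap.exists_isCompact_image_eq_univ {X Y : Type*} [TopologicalSpace X]
    [TopologicalSpace Y] [LocallyCompactSpace X] [CompactSpace Y] {f : X → Y}
    (hf : IsOpenMap f) (hsurj : Function.Surjective f) :
    ∃ K : Set X, IsCompact K ∧ f '' K = univ := by
  choose C hC hxC using fun x : X => exists_compact_mem_nhds x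
  obtain ⟨t, ht⟩ := isCompact_univ.elim_finite_subcover (fun x => f '' interior (C x))
    (fun x => hf _ isOpen_interior) fun y _ => by
      obtain ⟨x, rfl⟩ := hsurj y
      exact mem_iUnion.2 ⟨x, mem_image_of_mem f (mem_interior_iff_mem_nhds.2 (hxC x))⟩
  refine ⟨⋃ x ∈ t, C x, t.isCompact_biUnion fun x _ => hC x, eq_univ_of_univ_subset ?_⟩
  exact ht.trans <| iUnion₂_subset fun x hx =>
    image_mono (interior_subset.trans (subset_biUnion_of_mem (u := C) hx))

namespace Subgroup

variable {G : Type*} [Group G]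

-- `K` only has to meet every left coset of `H`; it need not be a transversal.
theorem le_closure_inter_inv_mul_mul {H : Subgroup G} {S K : Set G} (hS : closure S = ⊤)
    (hS1 : 1 ∈ S) (hK1 : 1 ∈ K) (hK : ∀ g, ∃ k ∈ K, k⁻¹ * g ∈ H) :
    H ≤ closure ((H : Set G) ∩ (K⁻¹ * S * K)) := by
  set T := (H : Set G) ∩ (K⁻¹ * S * K)
  have mem_T {k s k' : G} (hk : k ∈ K) (hs : s ∈ S) (hk' : k' ∈ K) (hH : k⁻¹ * s * k' ∈ H) :
      k⁻¹ * s * k' ∈ closure T :=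
    subset_closure ⟨hH, mul_mem_mul (mul_mem_mul (inv_mem_inv.2 hk) hs) hk'⟩
  have mem_mul_closure (g : G) : g ∈ K * (closure T : Set G) := by
    induction (hS ▸ mem_top g : g ∈ closure S) using closure_induction_left with
    | one => exact ⟨1, hK1, 1, one_mem _, one_mul 1⟩
    | mul_left s hs y _ ih =>
      obtain ⟨k, hk, t, ht, rfl⟩ := ih
      obtain ⟨k', hk', hH⟩ := hK (s * k)
      refine ⟨k', hk', k'⁻¹ * s * k * t, mul_mem (mem_T hk' hs hk ?_) ht, by group⟩
      simpa only [mul_assoc] using hH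
    | inv_mul_cancel s hs y _ ih =>
      obtain ⟨k, hk, t, ht, rfl⟩ := ih
      obtain ⟨k', hk', hH⟩ := hK (s⁻¹ * k)
      refine ⟨k', hk', (k⁻¹ * s * k')⁻¹ * t, mul_mem (inv_mem (mem_T hk hs hk' ?_)) ht, by group⟩
      simpa [mul_assoc] using H.inv_mem hH
  have hTH : closure T ≤ H := (closure_le _).2 inter_subset_left
  intro h hh
  obtain ⟨k, hk, t, ht, rfl⟩ := mem_mul_closure h
  have hkH : k ∈ H := by simpa using H.mul_mem hh (H.inv_mem (hTH ht))
  refine mul_mem ?_ ht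
  simpa using mem_T hK1 hS1 hk (by simpa using hkH)

variable [TopologicalSpace G] [IsTopologicalGroup G]

theorem finiteIndex_of_le_of_isOpen {N H : Subgroup G} [CompactSpace (G ⧸ N)] (hNH : N ≤ H)
    (hH : IsOpen (H : Set G)) : H.FiniteIndex := by
  have : DiscreteTopology (G ⧸ H) := QuotientGroup.discreteTopology hH
  have hcont : Continuous (quotientMapOfLE hNH) :=
    QuotientGroup.isOpenQuotientMap_mk.isQuotientMap.continuous_iff.2 continuous_quot_mk
  have hsurj : Function.Surjective (quotientMapOfLE hNH) := fun q => by
    obtain ⟨g, rfl⟩ := QuotientGroup.mk_surjective q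
    exact ⟨g, rfl⟩
  have : CompactSpace (G ⧸ H) := hsurj.compactSpace hcont
  have : Finite (G ⧸ H) := finite_of_compact_of_discrete
  exact finiteIndex_of_finite_quotient

theorem fg_of_discrete_of_compactSpace_quotient [T2Space G] [LocallyCompactSpace G]
    (hcg : ∃ S : Set G, IsCompact S ∧ closure S = ⊤) (N : Subgroup G) [DiscreteTopology N]
    [CompactSpace (G ⧸ N)] : N.FG := by
  obtain ⟨S, hS, hSG⟩ := hcg
  obtain ⟨K, hK, hKN⟩ := QuotientGroup.isOpenMap_coe.exists_isCompact_image_eq_univ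
    (QuotientGroup.mk_surjective (s := N))
  have hK' (g : G) : ∃ k ∈ insert 1 K, k⁻¹ * g ∈ N := by
    obtain ⟨k, hk, hkg⟩ := hKN.symm ▸ mem_univ (g : G ⧸ N)
    exact ⟨k, mem_insert_of_mem _ hk, QuotientGroup.eq.1 hkg⟩
  set T := (N : Set G) ∩ ((insert 1 K)⁻¹ * insert 1 S * insert 1 K)
  have hTc : IsCompact T :=
    (((hK.insert 1).inv.mul (hS.insert 1)).mul (hK.insert 1)).inter_left isClosed_of_discrete
  have hT : T.Finite := hTc.finite ((isDiscrete_iff_discreteTopology.2 ‹_›).mono inter_subset_left)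
  refine ⟨hT.toFinset, le_antisymm ?_ ?_⟩ <;> rw [Finite.coe_toFinset]
  · exact (closure_le _).2 inter_subset_left
  · exact le_closure_inter_inv_mul_mul (top_le_iff.1 (hSG ▸ closure_mono (subset_insert 1 S)))
      (mem_insert 1 S) (mem_insert 1 K) hK'

theorem isOpen_centralizer_singleton_of_mem {N : Subgroup G} [N.Normal] [DiscreteTopology N]
    {t : G} (ht : t ∈ N) : IsOpen (centralizer {t} : Set G) := by
  let conj : G → N := fun g => ⟨g * t * g⁻¹, Normal.conj_mem ‹_› t ht g⟩
  have hconj : Continuous conj := by fun_prop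
  convert (isOpen_discrete {(⟨t, ht⟩ : N)}).preimage hconj using 1
  ext g
  simp [conj, mem_centralizer_singleton_iff, mul_inv_eq_iff_eq_mul]

theorem isOpen_centralizer_of_fg {N : Subgroup G} [N.Normal] [DiscreteTopology N] (hN : N.FG) :
    IsOpen (centralizer (N : Set G) : Set G) := by
  obtain ⟨T, rfl⟩ := hN
  have : (centralizer (T : Set G) : Set G) = ⋂ t ∈ T, (centralizer {t} : Set G) := by
    ext g
    simp [mem_centralizer_iff, eq_comm]
  rw [centralizer_closure, this]
  exact isOpen_biInter_finset fun t ht => isOpen_centralizer_singleton_of_mem (subset_closure ht)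

theorem isOpen_normalCore {U : Subgroup G} (hU : IsOpen (U : Set G))
    [(normalizer (U : Set G)).FiniteIndex] : IsOpen (U.normalCore : Set G) := by
  have hstab : MulAction.stabilizer (ConjAct G) U =
      (normalizer (U : Set G)).comap (ConjAct.ofConjAct.toMonoidHom : ConjAct G →* G) := by
    ext g
    rw [MulAction.mem_stabilizer_iff, mem_comap, ← conjAct_pointwise_smul_iff]
    rfl
  have hfin : (MulAction.orbit (ConjAct G) U).Finite := by
    apply Set.finite_of_ncard_ne_zero
    rw [← MulAction.index_stabilizer, hstab,
      index_comap_of_surjective _ ConjAct.ofConjAct.surjective]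
    exact FiniteIndex.index_ne_zero
  rw [normalCore_eq_iInf_conjAct, coe_iInf, ← biInter_range]
  exact hfin.isOpen_biInter fun _ ⟨g, hg⟩ => hg ▸ (coe_pointwise_smul g U ▸ hU.smul g)

end Subgroup

section VanDantzig

variable {G : Type*} [Group G] [TopologicalSpace G] [IsTopologicalGroup G]

theorem isOpen_stabilizer_of_isCompact_of_isOpen {W : Set G} (hWc : IsCompact W)
    (hWo : IsOpen W) : IsOpen (MulAction.stabilizer G W : Set G) := by
  obtain ⟨V, hV, hVW⟩ := compact_open_separated_mul_left hWc hWo subset_rfl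
  refine (MulAction.stabilizer G W).isOpen_of_mem_nhds (g := 1)
    (Filter.mem_of_superset (Filter.inter_mem hV (inv_mem_nhds_one G hV)) ?_)
  rintro g ⟨hg, hg'⟩
  have h1 : g • W ⊆ W := (smul_set_subset_mul hg).trans hVW
  have h2 : g⁻¹ • W ⊆ W := (smul_set_subset_mul (mem_inv.1 hg')).trans hVW
  exact MulAction.mem_stabilizer_iff.2 (h1.antisymm (subset_smul_set_iff.2 h2))

-- van Dantzig's theorem
theorem exists_isOpen_isCompact_subgroup_subset [LocallyCompactSpace G] [T2Space G]
    [TotallyDisconnectedSpace G] {Ω : Set G} (hΩ : Ω ∈ 𝓝 1) :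
    ∃ U : Subgroup G, IsOpen (U : Set G) ∧ IsCompact (U : Set G) ∧ (U : Set G) ⊆ Ω := by
  obtain ⟨C, hC, hCΩ, hCc⟩ := local_compact_nhds hΩ
  obtain ⟨W, hWcl, h1W, hWC⟩ := loc_compact_Haus_tot_disc_of_zero_dim.mem_nhds_iff.1 hC
  have hWc : IsCompact W := hCc.of_isClosed_subset hWcl.isClosed hWC
  have hopen := isOpen_stabilizer_of_isCompact_of_isOpen hWc hWcl.isOpen
  have hsub : (MulAction.stabilizer G W : Set G) ⊆ W := fun g hg => by
    simpa [MulAction.mem_stabilizer_iff.1 hg] using smul_mem_smul_set (a := g) h1W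
  exact ⟨_, hopen, hWc.of_isClosed_subset (Subgroup.isClosed_of_isOpen _ hopen) hsub,
    hsub.trans (hWC.trans hCΩ)⟩

end VanDantzig

/-- Let `G` be a compactly generated locally compact group and `N` a discrete cocompact
normal subgroup.  Then the centralizer `C_G(N)` is an open normal subgroup of `G`, the
product `N · C_G(N)` is open and of finite index in `G`, and if `G` is moreover totally
disconnected then `G` has a compact open normal subgroup intersecting `N` trivially. -/
theorem centralizer_open_of_discrete_cocompact_normal
    {G : Type*} [Group G] [TopologicalSpace G] [IsTopologicalGroup G]
    [LocallyCompactSpace G] [T2Space G]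
    (hcg : ∃ S : Set G, IsCompact S ∧ Subgroup.closure S = ⊤)
    (N : Subgroup G) [N.Normal] (hNdisc : DiscreteTopology ↥N)
    (hNcc : IsCompact (Set.univ : Set (G ⧸ N))) :
    IsOpen ((Subgroup.centralizer (N : Set G) : Subgroup G) : Set G) ∧
      (Subgroup.centralizer (N : Set G)).Normal ∧
      IsOpen (((N ⊔ Subgroup.centralizer (N : Set G) : Subgroup G)) : Set G) ∧
      (N ⊔ Subgroup.centralizer (N : Set G)).index ≠ 0 ∧
      (TotallyDisconnectedSpace G →
        ∃ W : Subgroup G, W.Normal ∧ IsCompact (W : Set G) ∧ IsOpen (W : Set G) ∧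
          W ⊓ N = ⊥) := by
  have : CompactSpace (G ⧸ N) := isCompact_univ_iff.1 hNcc
  have hC : IsOpen (Subgroup.centralizer (N : Set G) : Set G) :=
    Subgroup.isOpen_centralizer_of_fg (Subgroup.fg_of_discrete_of_compactSpace_quotient hcg N)
  have hNC := Subgroup.isOpen_mono (H₂ := N ⊔ Subgroup.centralizer (N : Set G)) le_sup_right hC
  refine ⟨hC, inferInstance, hNC,
    (Subgroup.finiteIndex_of_le_of_isOpen le_sup_left hNC).index_ne_zero, fun _ => ?_⟩
  obtain ⟨V, hV, hVN⟩ := nhds_inter_eq_singleton_of_mem_discrete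
    (isDiscrete_iff_discreteTopology.2 hNdisc) N.one_mem
  obtain ⟨U, hUo, hUc, hUsub⟩ :=
    exists_isOpen_isCompact_subgroup_subset (Filter.inter_mem hV (hC.mem_nhds (one_mem _)))
  have hNU : N ≤ Subgroup.normalizer (U : Set G) :=
    (Subgroup.le_centralizer_iff.1 fun u hu => (hUsub hu).2).trans
      (Subgroup.centralizer_le_normalizer _)
  have : (Subgroup.normalizer (U : Set G)).FiniteIndex :=
    Subgroup.finiteIndex_of_le_of_isOpen hNU (Subgroup.isOpen_mono Subgroup.le_normalizer hUo)
  have hWo := Subgroup.isOpen_normalCore hUo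
  refine ⟨U.normalCore, inferInstance,
    hUc.of_isClosed_subset (Subgroup.isClosed_of_isOpen _ hWo) U.normalCore_le, hWo,
    eq_bot_iff.2 fun x ⟨hxW, hxN⟩ => ?_⟩
  have hx : x ∈ V ∩ (N : Set G) := ⟨(hUsub (U.normalCore_le hxW)).1, hxN⟩
  rwa [hVN] at hx
end
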